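/- arXiv:2007.10012 — 7 statements merged into one kernel-verified Lean document; each statement's English description precedes it below -/
import Mathlib

section
/- In the abstract discrete Biot setting, there exists a constant γ > 0 depending only on γ_a, C_a, C_b, β_S and τ — in particular independent of κ ∈ (0,1] and of c₀ ∈ [0,1) — such that for every (u,z,p) ∈ U × W × Q, sup over nonzero (v,r,q) ∈ U × W × Q of B(u,z,p;v,r,q)/‖(v,r,q)‖_{UWQ} is at least γ·‖(u,z,p)‖_{UWQ}. -/
open scoped RealInnerProductSpace

/-- The composite bilinear form
`B(u,z,p;v,r,q) = a(u,v) + b_U(v,p) + τ·c(z,r) + τ·b_W(r,p) + b_U(u,q) + τ·b_W(z,q) − d(p,q)`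
of the abstract discrete Biot setting, with `b_U(v,q) = ⟨D_U v, q⟩`, `b_W(w,q) = ⟨D_W w, q⟩`,
`c(z,w) = κ⁻¹⟨z,w⟩` and `d(p,q) = c₀⟨p,q⟩`. -/
noncomputable def biotB {U W Q : Type*}
    [NormedAddCommGroup U] [InnerProductSpace ℝ U]
    [NormedAddCommGroup W] [InnerProductSpace ℝ W]
    [NormedAddCommGroup Q] [InnerProductSpace ℝ Q]
    (a : U →ₗ[ℝ] U →ₗ[ℝ] ℝ) (DU : U →ₗ[ℝ] Q) (DW : W →ₗ[ℝ] Q)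
    (τ κ c₀ : ℝ) (u : U) (z : W) (p : Q) (v : U) (r : W) (q : Q) : ℝ :=
  a u v + ⟪DU v, p⟫ + τ * (κ⁻¹ * ⟪z, r⟫) + τ * ⟪DW r, p⟫
    + ⟪DU u, q⟫ + τ * ⟪DW z, q⟫ - c₀ * ⟪p, q⟫

/-- The triple norm `‖(u,z,p)‖_{UWQ} = (‖u‖_U² + |||z|||² + ‖p‖_Q²)^{1/2}` where
`|||z|||² = (τ/κ)‖z‖_{W0}² + τ²‖D_W z‖_Q²`. -/
noncomputable def tripleNorm {U W Q : Type*}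
    [NormedAddCommGroup U] [InnerProductSpace ℝ U]
    [NormedAddCommGroup W] [InnerProductSpace ℝ W]
    [NormedAddCommGroup Q] [InnerProductSpace ℝ Q]
    (DW : W →ₗ[ℝ] Q) (τ κ : ℝ) (u : U) (z : W) (p : Q) : ℝ :=
  Real.sqrt (‖u‖ ^ 2 + ((τ / κ) * ‖z‖ ^ 2 + τ ^ 2 * ‖DW z‖ ^ 2) + ‖p‖ ^ 2)

private lemma young_ineq (a b c X Y : ℝ) (ha : 0 ≤ a) (hb : 0 ≤ b) (hc : 0 ≤ c)
    (hX : 0 ≤ X) (hY : 0 ≤ Y) (h : c ^ 2 ≤ 4 * a * b) :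
    c * (X * Y) ≤ a * X ^ 2 + b * Y ^ 2 := by
  rcases eq_or_lt_of_le ha with h0 | ha'
  · have hc0 : c = 0 := by nlinarith [sq_nonneg c]
    subst hc0
    have : 0 ≤ b * Y ^ 2 := mul_nonneg hb (sq_nonneg Y)
    nlinarith
  · nlinarith [sq_nonneg (2*a*X - c*Y), mul_nonneg (sub_nonneg.mpr h) (sq_nonneg Y), ha'.le]

private lemma le_sqrt_of_sq_le {x S : ℝ} (hx : 0 ≤ x) (h : x ^ 2 ≤ S) : x ≤ Real.sqrt S := by
  have h2 := Real.sqrt_le_sqrt h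
  rwa [Real.sqrt_sq hx] at h2


set_option maxHeartbeats 1600000 in
/-- Banach–Nečas–Babuška inf-sup stability of the composite Biot form `B` for minimally
Stokes–Biot stable discretizations: there is `γ > 0` depending only on `γ_a, C_a, C_b, β_S`
and `τ` — in particular independent of `κ ∈ (0,1]` and `c₀ ∈ [0,1)` — such that for every
`(u,z,p)`, `sup_{(v,r,q)≠0} B(u,z,p;v,r,q)/‖(v,r,q)‖_{UWQ} ≥ γ‖(u,z,p)‖_{UWQ}`. -/
theorem biot_infsup_stability {U W Q : Type*}
    [NormedAddCommGroup U] [InnerProductSpace ℝ U] [FiniteDimensional ℝ U]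
    [NormedAddCommGroup W] [InnerProductSpace ℝ W] [FiniteDimensional ℝ W]
    [NormedAddCommGroup Q] [InnerProductSpace ℝ Q] [FiniteDimensional ℝ Q]
    (τ γa Ca Cb βS : ℝ)
    (hτ : 0 < τ) (hγa : 0 < γa) (hCa : 0 < Ca) (hCb : 0 < Cb) (hβS : 0 < βS) :
    ∃ γ : ℝ, 0 < γ ∧
      ∀ (κ c₀ : ℝ), 0 < κ → κ ≤ 1 → 0 ≤ c₀ → c₀ < 1 →
      ∀ (a : U →ₗ[ℝ] U →ₗ[ℝ] ℝ) (DU : U →ₗ[ℝ] Q) (DW : W →ₗ[ℝ] Q),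
        (∀ u v : U, a u v = a v u) →
        (∀ u : U, γa * ‖u‖ ^ 2 ≤ a u u) →
        (∀ u v : U, |a u v| ≤ Ca * ‖u‖ * ‖v‖) →
        (∀ v : U, ‖DU v‖ ≤ Cb * ‖v‖) →
        (∀ q : Q, βS * ‖q‖ ≤ ⨆ v : {v : U // v ≠ 0}, ⟪DU (v : U), q⟫ / ‖(v : U)‖) →
        ∀ (u : U) (z : W) (p : Q),
          γ * tripleNorm DW τ κ u z p ≤
            ⨆ x : {x : U × W × Q // x ≠ 0},
              biotB a DU DW τ κ c₀ u z p (x : U × W × Q).1 (x : U × W × Q).2.1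
                  (x : U × W × Q).2.2 /
                tripleNorm DW τ κ (x : U × W × Q).1 (x : U × W × Q).2.1 (x : U × W × Q).2.2 := by
  classical
  set δ : ℝ := γa * βS / (2 * Ca ^ 2) with hδdef
  have hδ : 0 < δ := div_pos (mul_pos hγa hβS) (by positivity)
  set θ : ℝ := min (γa / (4 * Cb ^ 2)) (δ * βS / 4) with hθdef
  have hθ : 0 < θ := lt_min (div_pos hγa (by positivity)) (div_pos (mul_pos hδ hβS) (by norm_num))
  set c₁ : ℝ := min (min (γa / 4) 1) (min (θ / 4) (δ * βS / 8)) with hc₁def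
  have hc₁ : 0 < c₁ :=
    lt_min (lt_min (by linarith) one_pos) (lt_min (by linarith) (div_pos (mul_pos hδ hβS) (by norm_num)))
  set C₂ : ℝ := Real.sqrt (2 + 2 * δ ^ 2 + 2 * θ ^ 2) with hC₂def
  have hC₂ : 0 < C₂ := Real.sqrt_pos.mpr (by positivity)
  have hc₁a : c₁ ≤ γa / 4 := le_trans (min_le_left _ _) (min_le_left _ _)
  have hc₁b : c₁ ≤ 1 := le_trans (min_le_left _ _) (min_le_right _ _)
  have hc₁c : c₁ ≤ θ / 4 := le_trans (min_le_right _ _) (min_le_left _ _)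
  have hc₁d : c₁ ≤ δ * βS / 8 := le_trans (min_le_right _ _) (min_le_right _ _)
  have hθ1 : θ ≤ γa / (4 * Cb ^ 2) := min_le_left _ _
  have hθ2 : θ ≤ δ * βS / 4 := min_le_right _ _
  have hθCb : θ * Cb ^ 2 ≤ γa / 4 := by
    have h2 : θ * Cb ^ 2 ≤ γa / (4 * Cb ^ 2) * Cb ^ 2 :=
      mul_le_mul_of_nonneg_right hθ1 (by positivity)
    have h3 : γa / (4 * Cb ^ 2) * Cb ^ 2 = γa / 4 := by
      field_simp
    linarith
  have hδCa : δ * Ca ^ 2 = γa * βS / 2 := by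
    rw [hδdef]; field_simp
  refine ⟨c₁ / C₂, div_pos hc₁ hC₂, ?_⟩
  intro κ c₀ hκ hκ1 hc₀ hc₀1 a DU DW hsym hcoer habnd hDU hinfsup u z p
  have hτκ : 0 < τ / κ := div_pos hτ hκ
  set N := tripleNorm DW τ κ u z p with hNdef
  have hNS : N = Real.sqrt (‖u‖ ^ 2 + ((τ / κ) * ‖z‖ ^ 2 + τ ^ 2 * ‖DW z‖ ^ 2) + ‖p‖ ^ 2) :=
    hNdef.trans rfl
  have hz2 : 0 ≤ (τ / κ) * ‖z‖ ^ 2 := mul_nonneg hτκ.le (sq_nonneg _)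
  have hdz2 : 0 ≤ τ ^ 2 * ‖DW z‖ ^ 2 := mul_nonneg (sq_nonneg _) (sq_nonneg _)
  have hS0 : (0:ℝ) ≤ ‖u‖ ^ 2 + ((τ / κ) * ‖z‖ ^ 2 + τ ^ 2 * ‖DW z‖ ^ 2) + ‖p‖ ^ 2 := by
    have := sq_nonneg ‖u‖; have := sq_nonneg ‖p‖; linarith
  have hN0 : 0 ≤ N := by rw [hNS]; exact Real.sqrt_nonneg _
  have hN2 : N ^ 2 = ‖u‖ ^ 2 + ((τ / κ) * ‖z‖ ^ 2 + τ ^ 2 * ‖DW z‖ ^ 2) + ‖p‖ ^ 2 := by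
    rw [hNS]; exact Real.sq_sqrt hS0
  -- component bounds for N
  have hsqτκ : Real.sqrt (τ / κ) * Real.sqrt (τ / κ) = τ * κ⁻¹ := by
    rw [Real.mul_self_sqrt hτκ.le, div_eq_mul_inv]
  have huN : ‖u‖ ≤ N := by
    rw [hNS]
    refine le_sqrt_of_sq_le (norm_nonneg u) ?_
    have := sq_nonneg ‖p‖; linarith
  have hpN : ‖p‖ ≤ N := by
    rw [hNS]
    refine le_sqrt_of_sq_le (norm_nonneg p) ?_
    have := sq_nonneg ‖u‖; linarith
  have hzN : Real.sqrt (τ / κ) * ‖z‖ ≤ N := by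
    rw [hNS]
    refine le_sqrt_of_sq_le (mul_nonneg (Real.sqrt_nonneg _) (norm_nonneg _)) ?_
    have he : (Real.sqrt (τ / κ) * ‖z‖) ^ 2 = (τ / κ) * ‖z‖ ^ 2 := by
      rw [mul_pow, Real.sq_sqrt hτκ.le]
    rw [he]
    have := sq_nonneg ‖u‖; have := sq_nonneg ‖p‖; linarith
  have hDzN : τ * ‖DW z‖ ≤ N := by
    rw [hNS]
    refine le_sqrt_of_sq_le (mul_nonneg hτ.le (norm_nonneg _)) ?_
    have he : (τ * ‖DW z‖) ^ 2 = τ ^ 2 * ‖DW z‖ ^ 2 := by ring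
    rw [he]
    have := sq_nonneg ‖u‖; have := sq_nonneg ‖p‖; linarith
  -- global continuity bound:  B(u,z,p;v,r,q) ≤ (Ca+2Cb+4)·N·T(v,r,q)
  have hMT : ∀ (v' : U) (r' : W) (q' : Q),
      biotB a DU DW τ κ c₀ u z p v' r' q'
        ≤ (Ca + 2 * Cb + 4) * N * tripleNorm DW τ κ v' r' q' := by
    intro v' r' q'
    have hTS : tripleNorm DW τ κ v' r' q'
        = Real.sqrt (‖v'‖ ^ 2 + ((τ / κ) * ‖r'‖ ^ 2 + τ ^ 2 * ‖DW r'‖ ^ 2) + ‖q'‖ ^ 2) := rfl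
    set T := tripleNorm DW τ κ v' r' q' with hTdef
    have hr2 : 0 ≤ (τ / κ) * ‖r'‖ ^ 2 := mul_nonneg hτκ.le (sq_nonneg _)
    have hdr2 : 0 ≤ τ ^ 2 * ‖DW r'‖ ^ 2 := mul_nonneg (sq_nonneg _) (sq_nonneg _)
    have hT0 : 0 ≤ T := by rw [hTS]; exact Real.sqrt_nonneg _
    have hvT : ‖v'‖ ≤ T := by
      rw [hTS]
      refine le_sqrt_of_sq_le (norm_nonneg v') ?_
      have := sq_nonneg ‖q'‖; linarith
    have hqT : ‖q'‖ ≤ T := by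
      rw [hTS]
      refine le_sqrt_of_sq_le (norm_nonneg q') ?_
      have := sq_nonneg ‖v'‖; linarith
    have hrT : Real.sqrt (τ / κ) * ‖r'‖ ≤ T := by
      rw [hTS]
      refine le_sqrt_of_sq_le (mul_nonneg (Real.sqrt_nonneg _) (norm_nonneg _)) ?_
      have he : (Real.sqrt (τ / κ) * ‖r'‖) ^ 2 = (τ / κ) * ‖r'‖ ^ 2 := by
        rw [mul_pow, Real.sq_sqrt hτκ.le]
      rw [he]
      have := sq_nonneg ‖v'‖; have := sq_nonneg ‖q'‖; linarith
    have hDrT : τ * ‖DW r'‖ ≤ T := by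
      rw [hTS]
      refine le_sqrt_of_sq_le (mul_nonneg hτ.le (norm_nonneg _)) ?_
      have he : (τ * ‖DW r'‖) ^ 2 = τ ^ 2 * ‖DW r'‖ ^ 2 := by ring
      rw [he]
      have := sq_nonneg ‖v'‖; have := sq_nonneg ‖q'‖; linarith
    have t1 : a u v' ≤ Ca * N * T := by
      have h1 := le_of_abs_le (habnd u v')
      have h2 : Ca * ‖u‖ * ‖v'‖ ≤ Ca * N * T :=
        mul_le_mul (mul_le_mul_of_nonneg_left huN hCa.le) hvT (norm_nonneg v')
          (mul_nonneg hCa.le hN0)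
      linarith only [h1, h2]
    have t2 : ⟪DU v', p⟫ ≤ Cb * N * T := by
      have h1 := real_inner_le_norm (DU v') p
      have h2 : ‖DU v'‖ * ‖p‖ ≤ (Cb * ‖v'‖) * ‖p‖ :=
        mul_le_mul_of_nonneg_right (hDU v') (norm_nonneg p)
      have h3 : (Cb * ‖v'‖) * ‖p‖ ≤ (Cb * T) * N :=
        mul_le_mul (mul_le_mul_of_nonneg_left hvT hCb.le) hpN (norm_nonneg p)
          (mul_nonneg hCb.le hT0)
      linarith only [h1, h2, h3]
    have t3 : τ * (κ⁻¹ * ⟪z, r'⟫) ≤ N * T := by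
      have h1 : ⟪z, r'⟫ ≤ ‖z‖ * ‖r'‖ := real_inner_le_norm z r'
      have h2 : τ * κ⁻¹ * ⟪z, r'⟫ ≤ τ * κ⁻¹ * (‖z‖ * ‖r'‖) :=
        mul_le_mul_of_nonneg_left h1 (mul_nonneg hτ.le (inv_pos.mpr hκ).le)
      have h3 : τ * κ⁻¹ * (‖z‖ * ‖r'‖)
          = (Real.sqrt (τ / κ) * ‖z‖) * (Real.sqrt (τ / κ) * ‖r'‖) := by
        rw [← hsqτκ]; ring
      have h4 : (Real.sqrt (τ / κ) * ‖z‖) * (Real.sqrt (τ / κ) * ‖r'‖) ≤ N * T :=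
        mul_le_mul hzN hrT (mul_nonneg (Real.sqrt_nonneg _) (norm_nonneg _)) hN0
      linarith only [h2, h3, h4]
    have t4 : τ * ⟪DW r', p⟫ ≤ N * T := by
      have h1 : ⟪DW r', p⟫ ≤ ‖DW r'‖ * ‖p‖ := real_inner_le_norm _ _
      have h2 : τ * ⟪DW r', p⟫ ≤ τ * (‖DW r'‖ * ‖p‖) := mul_le_mul_of_nonneg_left h1 hτ.le
      have h3 : (τ * ‖DW r'‖) * ‖p‖ ≤ T * N :=
        mul_le_mul hDrT hpN (norm_nonneg p) hT0
      linarith only [h2, h3]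
    have t5 : ⟪DU u, q'⟫ ≤ Cb * N * T := by
      have h1 := real_inner_le_norm (DU u) q'
      have h2 : ‖DU u‖ * ‖q'‖ ≤ (Cb * ‖u‖) * ‖q'‖ :=
        mul_le_mul_of_nonneg_right (hDU u) (norm_nonneg q')
      have h3 : (Cb * ‖u‖) * ‖q'‖ ≤ (Cb * N) * T :=
        mul_le_mul (mul_le_mul_of_nonneg_left huN hCb.le) hqT (norm_nonneg q')
          (mul_nonneg hCb.le hN0)
      linarith only [h1, h2, h3]
    have t6 : τ * ⟪DW z, q'⟫ ≤ N * T := by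
      have h1 : ⟪DW z, q'⟫ ≤ ‖DW z‖ * ‖q'‖ := real_inner_le_norm _ _
      have h2 : τ * ⟪DW z, q'⟫ ≤ τ * (‖DW z‖ * ‖q'‖) := mul_le_mul_of_nonneg_left h1 hτ.le
      have h3 : (τ * ‖DW z‖) * ‖q'‖ ≤ N * T :=
        mul_le_mul hDzN hqT (norm_nonneg q') hN0
      linarith only [h2, h3]
    have t7 : -(c₀ * ⟪p, q'⟫) ≤ N * T := by
      have hx := (abs_le.mp (abs_real_inner_le_norm p q')).1
      have h1 : -(c₀ * ⟪p, q'⟫) ≤ c₀ * (‖p‖ * ‖q'‖) := by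
        have hh := mul_nonneg hc₀ (by linarith only [hx] : (0:ℝ) ≤ ‖p‖ * ‖q'‖ + ⟪p, q'⟫)
        linarith only [hh]
      have h2 : c₀ * (‖p‖ * ‖q'‖) ≤ ‖p‖ * ‖q'‖ := by
        have hh := mul_nonneg (sub_nonneg.mpr hc₀1.le)
          (mul_nonneg (norm_nonneg p) (norm_nonneg q'))
        linarith only [hh]
      have h3 : ‖p‖ * ‖q'‖ ≤ N * T := mul_le_mul hpN hqT (norm_nonneg q') hN0
      linarith only [h1, h2, h3]
    show biotB a DU DW τ κ c₀ u z p v' r' q' ≤ _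
    simp only [biotB]
    linarith only [t1, t2, t3, t4, t5, t6, t7]
  -- case split on whether (u,z,p) vanishes
  rcases eq_or_lt_of_le hS0 with hS | hSpos
  · -- degenerate case: u = z = p = 0
    have hu2 : ‖u‖ ^ 2 ≤ 0 := by
      have := sq_nonneg ‖p‖; linarith
    have hp2 : ‖p‖ ^ 2 ≤ 0 := by
      have := sq_nonneg ‖u‖; linarith
    have hzz2 : ‖z‖ ^ 2 = 0 := by
      have h1 : (τ / κ) * ‖z‖ ^ 2 ≤ 0 := by
        have := sq_nonneg ‖u‖; have := sq_nonneg ‖p‖; linarith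
      have heq : (τ / κ) * ‖z‖ ^ 2 = 0 := le_antisymm h1 hz2
      rcases mul_eq_zero.mp heq with h | h
      · exact absurd h hτκ.ne'
      · exact h
    have hu : u = 0 := norm_eq_zero.mp
      ((pow_eq_zero_iff (two_ne_zero)).mp (le_antisymm hu2 (sq_nonneg _)))
    have hp : p = 0 := norm_eq_zero.mp
      ((pow_eq_zero_iff (two_ne_zero)).mp (le_antisymm hp2 (sq_nonneg _)))
    have hz : z = 0 := norm_eq_zero.mp
      ((pow_eq_zero_iff (two_ne_zero)).mp hzz2)
    have hNzero : N = 0 := by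
      rw [hNS, hu, hp, hz]
      simp
    rw [hNzero, mul_zero]
    apply Real.iSup_nonneg
    intro x
    have hB0 : biotB a DU DW τ κ c₀ u z p (x : U × W × Q).1 (x : U × W × Q).2.1
        (x : U × W × Q).2.2 = 0 := by
      simp [biotB, hu, hp, hz]
    rw [hB0, zero_div]
  · -- main case
    -- choose the near-maximizer for the Stokes inf-sup condition
    obtain ⟨v₀, hv₀n, hv₀⟩ : ∃ v₀ : U, ‖v₀‖ ≤ ‖p‖ ∧ βS / 2 * ‖p‖ ^ 2 ≤ ⟪DU v₀, p⟫ := by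
      by_cases hp : p = 0
      · exact ⟨0, by simp [hp], by simp [hp]⟩
      · have hpn : 0 < ‖p‖ := norm_pos_iff.mpr hp
        have hne : Nonempty {v : U // v ≠ 0} := by
          by_contra hcon
          haveI hie : IsEmpty {v : U // v ≠ 0} := not_nonempty_iff.mp hcon
          have h2 := hinfsup p
          rw [Real.iSup_of_isEmpty] at h2
          have := mul_pos hβS hpn
          linarith only [h2, this]
        have hlt : βS / 2 * ‖p‖ < ⨆ v : {v : U // v ≠ 0}, ⟪DU (v : U), p⟫ / ‖(v : U)‖ := by
          refine lt_of_lt_of_le ?_ (hinfsup p)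
          have := mul_pos hβS hpn
          linarith only [this]
        obtain ⟨⟨v, hv⟩, hvlt⟩ := exists_lt_of_lt_ciSup hlt
        have hvn : 0 < ‖v‖ := norm_pos_iff.mpr hv
        refine ⟨(‖p‖ / ‖v‖) • v, ?_, ?_⟩
        · rw [norm_smul, Real.norm_eq_abs, abs_of_nonneg (by positivity),
            div_mul_cancel₀ _ (ne_of_gt hvn)]
        · have h3 : βS / 2 * ‖p‖ * ‖v‖ < ⟪DU v, p⟫ := by
            rw [lt_div_iff₀ hvn] at hvlt
            linarith
          rw [map_smul, real_inner_smul_left]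
          have h4 : (‖p‖ / ‖v‖) * (βS / 2 * ‖p‖ * ‖v‖) ≤ (‖p‖ / ‖v‖) * ⟪DU v, p⟫ :=
            mul_le_mul_of_nonneg_left h3.le (by positivity)
          have h5 : (‖p‖ / ‖v‖) * (βS / 2 * ‖p‖ * ‖v‖) = βS / 2 * ‖p‖ ^ 2 := by
            field_simp
          linarith
    -- test functions
    set v : U := u + δ • v₀ with hvdef
    set q : Q := -p + (θ * τ) • DW z with hqdef
    -- expansion of B at the test function
    have hBt : biotB a DU DW τ κ c₀ u z p v z q
        = a u u + δ * a u v₀ + δ * ⟪DU v₀, p⟫ + τ * κ⁻¹ * ‖z‖ ^ 2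
          + θ * τ * ⟪DU u, DW z⟫ + θ * τ ^ 2 * ‖DW z‖ ^ 2
          + c₀ * ‖p‖ ^ 2 - c₀ * (θ * τ) * ⟪p, DW z⟫ := by
      simp only [hvdef, hqdef, biotB, map_add, map_smul, LinearMap.add_apply,
        LinearMap.smul_apply, smul_eq_mul, inner_add_left, inner_add_right,
        inner_neg_left, inner_neg_right, real_inner_smul_left, real_inner_smul_right,
        real_inner_self_eq_norm_sq]
      ring
    -- Young inequalities
    have hθτ2 : 0 ≤ θ * τ ^ 2 := mul_nonneg hθ.le (sq_nonneg τ)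
    have Y1 : (δ * Ca) * (‖u‖ * ‖p‖) ≤ γa / 2 * ‖u‖ ^ 2 + δ * βS / 4 * ‖p‖ ^ 2 := by
      have hcond : (δ * Ca) ^ 2 ≤ 4 * (γa / 2) * (δ * βS / 4) := by
        have he : (δ * Ca) ^ 2 = (δ * Ca ^ 2) * δ := by ring
        rw [he, hδCa]
        exact le_of_eq (by ring)
      have hbpos : 0 < δ * βS := mul_pos hδ hβS
      exact young_ineq (γa / 2) (δ * βS / 4) (δ * Ca) ‖u‖ ‖p‖ (by linarith)
        (by linarith) (mul_nonneg hδ.le hCa.le) (norm_nonneg u) (norm_nonneg p) hcond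
    have Y2 : (θ * τ * Cb) * (‖u‖ * ‖DW z‖)
        ≤ γa / 4 * ‖u‖ ^ 2 + θ * τ ^ 2 / 4 * ‖DW z‖ ^ 2 := by
      have hcond : (θ * τ * Cb) ^ 2 ≤ 4 * (γa / 4) * (θ * τ ^ 2 / 4) := by
        have hm := mul_le_mul_of_nonneg_right hθCb hθτ2
        calc (θ * τ * Cb) ^ 2 = θ * Cb ^ 2 * (θ * τ ^ 2) := by ring
          _ ≤ γa / 4 * (θ * τ ^ 2) := hm
          _ = 4 * (γa / 4) * (θ * τ ^ 2 / 4) := by ring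
      exact young_ineq (γa / 4) (θ * τ ^ 2 / 4) (θ * τ * Cb) ‖u‖ ‖DW z‖ (by linarith)
        (by linarith) (mul_nonneg (mul_nonneg hθ.le hτ.le) hCb.le)
        (norm_nonneg u) (norm_nonneg (DW z)) hcond
    have Y3 : (θ * τ) * (‖p‖ * ‖DW z‖)
        ≤ θ / 2 * ‖p‖ ^ 2 + θ * τ ^ 2 / 2 * ‖DW z‖ ^ 2 :=
      young_ineq (θ / 2) (θ * τ ^ 2 / 2) (θ * τ) ‖p‖ ‖DW z‖ (by linarith)
        (by linarith) (mul_nonneg hθ.le hτ.le) (norm_nonneg p) (norm_nonneg (DW z))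
        (le_of_eq (by ring))
    -- prepared lower bounds
    have g1 : γa * ‖u‖ ^ 2 ≤ a u u := hcoer u
    have f2 : -(Ca * (‖u‖ * ‖p‖)) ≤ a u v₀ := by
      have h := (abs_le.mp (habnd u v₀)).1
      have h2 : Ca * ‖u‖ * ‖v₀‖ ≤ Ca * ‖u‖ * ‖p‖ :=
        mul_le_mul_of_nonneg_left hv₀n (mul_nonneg hCa.le (norm_nonneg u))
      linarith only [h, h2]
    have g2 : -(γa / 2 * ‖u‖ ^ 2 + δ * βS / 4 * ‖p‖ ^ 2) ≤ δ * a u v₀ := by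
      have h := mul_le_mul_of_nonneg_left f2 hδ.le
      linarith only [h, Y1]
    have g3 : δ * (βS / 2 * ‖p‖ ^ 2) ≤ δ * ⟪DU v₀, p⟫ :=
      mul_le_mul_of_nonneg_left hv₀ hδ.le
    have f3 : -(Cb * (‖u‖ * ‖DW z‖)) ≤ ⟪DU u, DW z⟫ := by
      have h := (abs_le.mp (abs_real_inner_le_norm (DU u) (DW z))).1
      have h2 : ‖DU u‖ * ‖DW z‖ ≤ (Cb * ‖u‖) * ‖DW z‖ :=
        mul_le_mul_of_nonneg_right (hDU u) (norm_nonneg _)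
      linarith only [h, h2]
    have g4 : -(γa / 4 * ‖u‖ ^ 2 + θ * τ ^ 2 / 4 * ‖DW z‖ ^ 2) ≤ θ * τ * ⟪DU u, DW z⟫ := by
      have h := mul_le_mul_of_nonneg_left f3 (mul_nonneg hθ.le hτ.le)
      linarith only [h, Y2]
    have g5 : c₀ * (θ * τ) * ⟪p, DW z⟫ ≤ θ / 2 * ‖p‖ ^ 2 + θ * τ ^ 2 / 2 * ‖DW z‖ ^ 2 := by
      have hx := (abs_le.mp (abs_real_inner_le_norm p (DW z))).2
      have h1 : c₀ * ⟪p, DW z⟫ ≤ ‖p‖ * ‖DW z‖ := by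
        have ha1 := mul_nonneg hc₀
          (by linarith only [hx] : (0:ℝ) ≤ ‖p‖ * ‖DW z‖ - ⟪p, DW z⟫)
        have ha2 := mul_nonneg (sub_nonneg.mpr hc₀1.le)
          (mul_nonneg (norm_nonneg p) (norm_nonneg (DW z)))
        linarith only [ha1, ha2]
      have h2 := mul_le_mul_of_nonneg_left h1 (mul_nonneg hθ.le hτ.le)
      linarith only [h2, Y3]
    have g6 : 0 ≤ c₀ * ‖p‖ ^ 2 := mul_nonneg hc₀ (sq_nonneg _)
    have hτκeq : τ * κ⁻¹ = τ / κ := (div_eq_mul_inv τ κ).symm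
    -- coefficient comparisons
    have g7 : c₁ * ‖u‖ ^ 2 ≤ γa / 4 * ‖u‖ ^ 2 :=
      mul_le_mul_of_nonneg_right hc₁a (sq_nonneg _)
    have g8 : c₁ * ((τ / κ) * ‖z‖ ^ 2) ≤ (τ / κ) * ‖z‖ ^ 2 := by
      have := mul_nonneg (sub_nonneg.mpr hc₁b) hz2
      linarith only [this]
    have g9 : c₁ * (τ ^ 2 * ‖DW z‖ ^ 2) ≤ θ / 4 * (τ ^ 2 * ‖DW z‖ ^ 2) :=
      mul_le_mul_of_nonneg_right hc₁c hdz2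
    have g10 : c₁ * ‖p‖ ^ 2 ≤ δ * βS / 8 * ‖p‖ ^ 2 :=
      mul_le_mul_of_nonneg_right hc₁d (sq_nonneg _)
    have g11 : θ / 2 * ‖p‖ ^ 2 ≤ δ * βS / 8 * ‖p‖ ^ 2 :=
      mul_le_mul_of_nonneg_right (by linarith) (sq_nonneg _)
    -- the key coercivity bound at the test function
    have key : c₁ * (‖u‖ ^ 2 + ((τ / κ) * ‖z‖ ^ 2 + τ ^ 2 * ‖DW z‖ ^ 2) + ‖p‖ ^ 2)
        ≤ biotB a DU DW τ κ c₀ u z p v z q := by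
      rw [hBt, hτκeq]
      linarith only [g1, g2, g3, g4, g5, g6, g7, g8, g9, g10, g11]
    -- norm bound on the test function
    have hTle : tripleNorm DW τ κ v z q ≤ C₂ * N := by
      have hvb : ‖v‖ ≤ ‖u‖ + δ * ‖p‖ := by
        calc ‖v‖ ≤ ‖u‖ + ‖δ • v₀‖ := norm_add_le u (δ • v₀)
          _ = ‖u‖ + δ * ‖v₀‖ := by
              rw [norm_smul, Real.norm_eq_abs, abs_of_nonneg hδ.le]
          _ ≤ ‖u‖ + δ * ‖p‖ := by
              have := mul_le_mul_of_nonneg_left hv₀n hδ.le; linarith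
      have hqb : ‖q‖ ≤ ‖p‖ + θ * τ * ‖DW z‖ := by
        calc ‖q‖ ≤ ‖-p‖ + ‖(θ * τ) • DW z‖ := norm_add_le _ _
          _ = ‖p‖ + θ * τ * ‖DW z‖ := by
              rw [norm_neg, norm_smul, Real.norm_eq_abs,
                abs_of_nonneg (mul_nonneg hθ.le hτ.le)]
      have hv2 : ‖v‖ ^ 2 ≤ 2 * ‖u‖ ^ 2 + 2 * δ ^ 2 * ‖p‖ ^ 2 := by
        have b1 : ‖v‖ ^ 2 ≤ (‖u‖ + δ * ‖p‖) ^ 2 := pow_le_pow_left₀ (norm_nonneg v) hvb 2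
        have b2 := sq_nonneg (‖u‖ - δ * ‖p‖)
        linarith only [b1, b2]
      have hq2 : ‖q‖ ^ 2 ≤ 2 * ‖p‖ ^ 2 + 2 * θ ^ 2 * τ ^ 2 * ‖DW z‖ ^ 2 := by
        have b1 : ‖q‖ ^ 2 ≤ (‖p‖ + θ * τ * ‖DW z‖) ^ 2 := pow_le_pow_left₀ (norm_nonneg q) hqb 2
        have b2 := sq_nonneg (‖p‖ - θ * τ * ‖DW z‖)
        linarith only [b1, b2]
      have harg : ‖v‖ ^ 2 + ((τ / κ) * ‖z‖ ^ 2 + τ ^ 2 * ‖DW z‖ ^ 2) + ‖q‖ ^ 2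
          ≤ (2 + 2 * δ ^ 2 + 2 * θ ^ 2)
            * (‖u‖ ^ 2 + ((τ / κ) * ‖z‖ ^ 2 + τ ^ 2 * ‖DW z‖ ^ 2) + ‖p‖ ^ 2) := by
        have a1 : 0 ≤ δ ^ 2 * ‖u‖ ^ 2 := mul_nonneg (sq_nonneg _) (sq_nonneg _)
        have a2 : 0 ≤ θ ^ 2 * ‖u‖ ^ 2 := mul_nonneg (sq_nonneg _) (sq_nonneg _)
        have a3 : 0 ≤ δ ^ 2 * ((τ / κ) * ‖z‖ ^ 2) := mul_nonneg (sq_nonneg _) hz2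
        have a4 : 0 ≤ θ ^ 2 * ((τ / κ) * ‖z‖ ^ 2) := mul_nonneg (sq_nonneg _) hz2
        have a5 : 0 ≤ δ ^ 2 * (τ ^ 2 * ‖DW z‖ ^ 2) := mul_nonneg (sq_nonneg _) hdz2
        have a6 : 0 ≤ θ ^ 2 * ‖p‖ ^ 2 := mul_nonneg (sq_nonneg _) (sq_nonneg _)
        have a7 : 0 ≤ δ ^ 2 * ‖p‖ ^ 2 := mul_nonneg (sq_nonneg _) (sq_nonneg _)
        linarith only [hv2, hq2, a1, a2, a3, a4, a5, a6, a7, hz2, hdz2]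
      have hstep : tripleNorm DW τ κ v z q
          ≤ Real.sqrt ((2 + 2 * δ ^ 2 + 2 * θ ^ 2)
            * (‖u‖ ^ 2 + ((τ / κ) * ‖z‖ ^ 2 + τ ^ 2 * ‖DW z‖ ^ 2) + ‖p‖ ^ 2)) :=
        Real.sqrt_le_sqrt harg
      calc tripleNorm DW τ κ v z q ≤ _ := hstep
        _ = C₂ * N := by
            rw [hC₂def, hNS, ← Real.sqrt_mul (by positivity)]
    -- positivity of the test function triple norm
    have hT0 : 0 ≤ tripleNorm DW τ κ v z q := Real.sqrt_nonneg _
    have hTpos : 0 < tripleNorm DW τ κ v z q := by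
      rcases lt_or_eq_of_le hT0 with h | h
      · exact h
      · exfalso
        have hb := hMT v z q
        rw [← h, mul_zero] at hb
        have := mul_pos hc₁ hSpos
        linarith only [key, hb, this]
    -- the test triple is nonzero
    have hne : ((v, z, q) : U × W × Q) ≠ 0 := by
      intro h0
      have h1 : v = 0 ∧ z = 0 ∧ q = 0 := by
        rw [Prod.mk_eq_zero, Prod.mk_eq_zero] at h0
        exact ⟨h0.1, h0.2.1, h0.2.2⟩
      have : tripleNorm DW τ κ v z q = 0 := by
        rw [h1.1, h1.2.1, h1.2.2]
        simp [tripleNorm]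
      linarith
    -- the family is bounded above
    have hBdd : BddAbove (Set.range fun x : {x : U × W × Q // x ≠ 0} =>
        biotB a DU DW τ κ c₀ u z p (x : U × W × Q).1 (x : U × W × Q).2.1 (x : U × W × Q).2.2 /
          tripleNorm DW τ κ (x : U × W × Q).1 (x : U × W × Q).2.1 (x : U × W × Q).2.2) := by
      refine ⟨(Ca + 2 * Cb + 4) * N, ?_⟩
      rintro y ⟨⟨⟨v', r', q'⟩, hx⟩, rfl⟩
      simp only
      have hT'pos : 0 < tripleNorm DW τ κ v' r' q' := by
        have h1 : v' ≠ 0 ∨ r' ≠ 0 ∨ q' ≠ 0 := by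
          by_contra hcon
          push_neg at hcon
          exact hx (by rw [Prod.mk_eq_zero, Prod.mk_eq_zero]
                       exact ⟨hcon.1, hcon.2.1, hcon.2.2⟩)
        have hTS : tripleNorm DW τ κ v' r' q'
            = Real.sqrt (‖v'‖ ^ 2 + ((τ / κ) * ‖r'‖ ^ 2 + τ ^ 2 * ‖DW r'‖ ^ 2) + ‖q'‖ ^ 2) := rfl
        rw [hTS]
        apply Real.sqrt_pos.mpr
        have b1 : 0 ≤ (τ / κ) * ‖r'‖ ^ 2 := mul_nonneg hτκ.le (sq_nonneg _)
        have b2 : 0 ≤ τ ^ 2 * ‖DW r'‖ ^ 2 := mul_nonneg (sq_nonneg _) (sq_nonneg _)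
        rcases h1 with h | h | h
        · have : 0 < ‖v'‖ ^ 2 := pow_pos (norm_pos_iff.mpr h) 2
          have := sq_nonneg ‖q'‖; linarith
        · have : 0 < (τ / κ) * ‖r'‖ ^ 2 := mul_pos hτκ (pow_pos (norm_pos_iff.mpr h) 2)
          have := sq_nonneg ‖v'‖; have := sq_nonneg ‖q'‖; linarith
        · have : 0 < ‖q'‖ ^ 2 := pow_pos (norm_pos_iff.mpr h) 2
          have := sq_nonneg ‖v'‖; linarith
      rw [div_le_iff₀ hT'pos]
      exact hMT v' r' q'
    -- conclusion
    have hfinal : c₁ / C₂ * N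
        ≤ biotB a DU DW τ κ c₀ u z p v z q / tripleNorm DW τ κ v z q := by
      rw [le_div_iff₀ hTpos]
      have h1 : c₁ / C₂ * N * tripleNorm DW τ κ v z q ≤ c₁ / C₂ * N * (C₂ * N) :=
        mul_le_mul_of_nonneg_left hTle (mul_nonneg (div_nonneg hc₁.le hC₂.le) hN0)
      have h2 : c₁ / C₂ * N * (C₂ * N) = c₁ * N ^ 2 := by
        field_simp
      rw [h2] at h1
      rw [hN2] at h1
      linarith [key]
    exact le_trans hfinal (le_ciSup hBdd (⟨(v, z, q), hne⟩ : {x : U × W × Q // x ≠ 0}))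
end

section
/- In the abstract discrete Biot setting, the composite bilinear form B is continuous with a constant depending only on C_a and C_b: there exists C > 0 depending only on C_a and C_b (independent of κ, c₀ and τ) such that |B(u,z,p;v,r,q)| ≤ C·‖(u,z,p)‖_{UWQ}·‖(v,r,q)‖_{UWQ} for all (u,z,p), (v,r,q) ∈ U × W × Q. -/
open scoped RealInnerProductSpace

lemma le_sqrt_of_sq_le' (a s : ℝ) (ha : 0 ≤ a) (h : a ^ 2 ≤ s) : a ≤ Real.sqrt s := by
  rw [show a = Real.sqrt (a ^ 2) from (Real.sqrt_sq ha).symm]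
  exact Real.sqrt_le_sqrt h

lemma prod_le_prod' (x y X Y : ℝ) (hx : 0 ≤ x) (hX : x ≤ X) (hY : y ≤ Y) (hy : 0 ≤ y) :
    x * y ≤ X * Y := mul_le_mul hX hY hy (hx.trans hX)

/-- Continuity of the composite Biot form `B` with a constant depending only on `C_a` and
`C_b` (independent of `κ`, `c₀`, `τ` and of the remaining setting constants `γ_a`, `β_S`):
`|B(u,z,p;v,r,q)| ≤ C‖(u,z,p)‖_{UWQ}‖(v,r,q)‖_{UWQ}`. -/
theorem biot_form_continuity {U W Q : Type*}
    [NormedAddCommGroup U] [InnerProductSpace ℝ U] [FiniteDimensional ℝ U]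
    [NormedAddCommGroup W] [InnerProductSpace ℝ W] [FiniteDimensional ℝ W]
    [NormedAddCommGroup Q] [InnerProductSpace ℝ Q] [FiniteDimensional ℝ Q]
    (Ca Cb : ℝ) (hCa : 0 < Ca) (hCb : 0 < Cb) :
    ∃ C : ℝ, 0 < C ∧
      ∀ (τ κ c₀ γa βS : ℝ), 0 < τ → 0 < κ → κ ≤ 1 → 0 ≤ c₀ → c₀ < 1 →
        0 < γa → 0 < βS →
      ∀ (a : U →ₗ[ℝ] U →ₗ[ℝ] ℝ) (DU : U →ₗ[ℝ] Q) (DW : W →ₗ[ℝ] Q),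
        (∀ u v : U, a u v = a v u) →
        (∀ u : U, γa * ‖u‖ ^ 2 ≤ a u u) →
        (∀ u v : U, |a u v| ≤ Ca * ‖u‖ * ‖v‖) →
        (∀ v : U, ‖DU v‖ ≤ Cb * ‖v‖) →
        (∀ q : Q, βS * ‖q‖ ≤ ⨆ v : {v : U // v ≠ 0}, ⟪DU (v : U), q⟫ / ‖(v : U)‖) →
        ∀ (u : U) (z : W) (p : Q) (v : U) (r : W) (q : Q),
          |biotB a DU DW τ κ c₀ u z p v r q| ≤
            C * tripleNorm DW τ κ u z p * tripleNorm DW τ κ v r q := by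
  refine ⟨Ca + 2 * Cb + 4, by positivity, ?_⟩
  intro τ κ c₀ γa βS hτ hκ hκ1 hc₀ hc₀1 hγa hβS a DU DW hsym hcoer ha hDU hinf u z p v r q
  have hτκ : (0:ℝ) ≤ τ / κ := by positivity
  set s := Real.sqrt (τ / κ) with hsdef
  have hs0 : 0 ≤ s := Real.sqrt_nonneg _
  have hs2 : s ^ 2 = τ / κ := Real.sq_sqrt hτκ
  set t1 := ‖u‖ with ht1def
  set w1 := s * ‖z‖ with hw1def
  set d1 := τ * ‖DW z‖ with hd1def
  set p1 := ‖p‖ with hp1def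
  set t2 := ‖v‖ with ht2def
  set w2 := s * ‖r‖ with hw2def
  set d2 := τ * ‖DW r‖ with hd2def
  set p2 := ‖q‖ with hp2def
  have ht1n : 0 ≤ t1 := norm_nonneg _
  have hw1n : 0 ≤ w1 := by positivity
  have hd1n : 0 ≤ d1 := by positivity
  have hp1n : 0 ≤ p1 := norm_nonneg _
  have ht2n : 0 ≤ t2 := norm_nonneg _
  have hw2n : 0 ≤ w2 := by positivity
  have hd2n : 0 ≤ d2 := by positivity
  have hp2n : 0 ≤ p2 := norm_nonneg _
  set N1 := tripleNorm DW τ κ u z p with hN1def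
  set N2 := tripleNorm DW τ κ v r q with hN2def
  have hN1eq : N1 = Real.sqrt (t1 ^ 2 + w1 ^ 2 + d1 ^ 2 + p1 ^ 2) := by
    rw [hN1def, tripleNorm]
    congr 1
    rw [hw1def, hd1def, mul_pow, mul_pow, hs2]
    ring
  have hN2eq : N2 = Real.sqrt (t2 ^ 2 + w2 ^ 2 + d2 ^ 2 + p2 ^ 2) := by
    rw [hN2def, tripleNorm]
    congr 1
    rw [hw2def, hd2def, mul_pow, mul_pow, hs2]
    ring
  have ht1 : t1 ≤ N1 := hN1eq ▸ le_sqrt_of_sq_le' _ _ ht1n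
    (by linarith [sq_nonneg w1, sq_nonneg d1, sq_nonneg p1])
  have hw1 : w1 ≤ N1 := hN1eq ▸ le_sqrt_of_sq_le' _ _ hw1n
    (by linarith [sq_nonneg t1, sq_nonneg d1, sq_nonneg p1])
  have hd1 : d1 ≤ N1 := hN1eq ▸ le_sqrt_of_sq_le' _ _ hd1n
    (by linarith [sq_nonneg t1, sq_nonneg w1, sq_nonneg p1])
  have hp1 : p1 ≤ N1 := hN1eq ▸ le_sqrt_of_sq_le' _ _ hp1n
    (by linarith [sq_nonneg t1, sq_nonneg w1, sq_nonneg d1])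
  have ht2 : t2 ≤ N2 := hN2eq ▸ le_sqrt_of_sq_le' _ _ ht2n
    (by linarith [sq_nonneg w2, sq_nonneg d2, sq_nonneg p2])
  have hw2 : w2 ≤ N2 := hN2eq ▸ le_sqrt_of_sq_le' _ _ hw2n
    (by linarith [sq_nonneg t2, sq_nonneg d2, sq_nonneg p2])
  have hd2 : d2 ≤ N2 := hN2eq ▸ le_sqrt_of_sq_le' _ _ hd2n
    (by linarith [sq_nonneg t2, sq_nonneg w2, sq_nonneg p2])
  have hp2 : p2 ≤ N2 := hN2eq ▸ le_sqrt_of_sq_le' _ _ hp2n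
    (by linarith [sq_nonneg t2, sq_nonneg w2, sq_nonneg d2])
  -- bounds on the seven terms
  have h1 : |a u v| ≤ Ca * (t1 * t2) := by rw [← mul_assoc]; exact ha u v
  have h2 : |⟪DU v, p⟫| ≤ Cb * (t2 * p1) := by
    calc |⟪DU v, p⟫| ≤ ‖DU v‖ * ‖p‖ := abs_real_inner_le_norm _ _
      _ ≤ (Cb * t2) * p1 := mul_le_mul_of_nonneg_right (hDU v) hp1n
      _ = Cb * (t2 * p1) := by ring
  have h3 : |τ * (κ⁻¹ * ⟪z, r⟫)| ≤ w1 * w2 := by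
    have hww : w1 * w2 = τ * (κ⁻¹ * (‖z‖ * ‖r‖)) := by
      have : w1 * w2 = s ^ 2 * (‖z‖ * ‖r‖) := by rw [hw1def, hw2def]; ring
      rw [this, hs2, div_eq_mul_inv]; ring
    rw [abs_mul, abs_mul, abs_of_pos hτ, abs_of_pos (inv_pos.mpr hκ), hww]
    gcongr
    exact abs_real_inner_le_norm z r
  have h4 : |τ * ⟪DW r, p⟫| ≤ d2 * p1 := by
    rw [abs_mul, abs_of_pos hτ, hd2def, hp1def, mul_assoc]
    gcongr
    exact abs_real_inner_le_norm (DW r) p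
  have h5 : |⟪DU u, q⟫| ≤ Cb * (t1 * p2) := by
    calc |⟪DU u, q⟫| ≤ ‖DU u‖ * ‖q‖ := abs_real_inner_le_norm _ _
      _ ≤ (Cb * t1) * p2 := mul_le_mul_of_nonneg_right (hDU u) hp2n
      _ = Cb * (t1 * p2) := by ring
  have h6 : |τ * ⟪DW z, q⟫| ≤ d1 * p2 := by
    rw [abs_mul, abs_of_pos hτ, hd1def, hp2def, mul_assoc]
    gcongr
    exact abs_real_inner_le_norm (DW z) q
  have h7 : |c₀ * ⟪p, q⟫| ≤ p1 * p2 := by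
    rw [abs_mul, abs_of_nonneg hc₀, hp1def, hp2def]
    calc c₀ * |⟪p, q⟫| ≤ 1 * |⟪p, q⟫| :=
          mul_le_mul_of_nonneg_right hc₀1.le (abs_nonneg _)
      _ = |⟪p, q⟫| := one_mul _
      _ ≤ ‖p‖ * ‖q‖ := abs_real_inner_le_norm p q

  have m1 : Ca * (t1 * t2) ≤ Ca * (N1 * N2) :=
    mul_le_mul_of_nonneg_left (prod_le_prod' _ _ _ _ ht1n ht1 ht2 ht2n) hCa.le
  have m2 : Cb * (t2 * p1) ≤ Cb * (N2 * N1) :=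
    mul_le_mul_of_nonneg_left (prod_le_prod' _ _ _ _ ht2n ht2 hp1 hp1n) hCb.le
  have m3 : w1 * w2 ≤ N1 * N2 := prod_le_prod' _ _ _ _ hw1n hw1 hw2 hw2n
  have m4 : d2 * p1 ≤ N2 * N1 := prod_le_prod' _ _ _ _ hd2n hd2 hp1 hp1n
  have m5 : Cb * (t1 * p2) ≤ Cb * (N1 * N2) :=
    mul_le_mul_of_nonneg_left (prod_le_prod' _ _ _ _ ht1n ht1 hp2 hp2n) hCb.le
  have m6 : d1 * p2 ≤ N1 * N2 := prod_le_prod' _ _ _ _ hd1n hd1 hp2 hp2n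
  have m7 : p1 * p2 ≤ N1 * N2 := prod_le_prod' _ _ _ _ hp1n hp1 hp2 hp2n
  have hsum : |biotB a DU DW τ κ c₀ u z p v r q| ≤
      |a u v| + |⟪DU v, p⟫| + |τ * (κ⁻¹ * ⟪z, r⟫)| + |τ * ⟪DW r, p⟫|
        + |⟪DU u, q⟫| + |τ * ⟪DW z, q⟫| + |c₀ * ⟪p, q⟫| := by
    rw [biotB]
    calc |a u v + ⟪DU v, p⟫ + τ * (κ⁻¹ * ⟪z, r⟫) + τ * ⟪DW r, p⟫
          + ⟪DU u, q⟫ + τ * ⟪DW z, q⟫ - c₀ * ⟪p, q⟫|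
        ≤ |a u v + ⟪DU v, p⟫ + τ * (κ⁻¹ * ⟪z, r⟫) + τ * ⟪DW r, p⟫
          + ⟪DU u, q⟫ + τ * ⟪DW z, q⟫| + |c₀ * ⟪p, q⟫| := abs_sub _ _
      _ ≤ |a u v + ⟪DU v, p⟫ + τ * (κ⁻¹ * ⟪z, r⟫) + τ * ⟪DW r, p⟫ + ⟪DU u, q⟫|
          + |τ * ⟪DW z, q⟫| + |c₀ * ⟪p, q⟫| := by
        gcongr <;> exact abs_add_le _ _
      _ ≤ |a u v + ⟪DU v, p⟫ + τ * (κ⁻¹ * ⟪z, r⟫) + τ * ⟪DW r, p⟫| + |⟪DU u, q⟫|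
          + |τ * ⟪DW z, q⟫| + |c₀ * ⟪p, q⟫| := by
        gcongr <;> exact abs_add_le _ _
      _ ≤ |a u v + ⟪DU v, p⟫ + τ * (κ⁻¹ * ⟪z, r⟫)| + |τ * ⟪DW r, p⟫| + |⟪DU u, q⟫|
          + |τ * ⟪DW z, q⟫| + |c₀ * ⟪p, q⟫| := by
        gcongr <;> exact abs_add_le _ _
      _ ≤ |a u v + ⟪DU v, p⟫| + |τ * (κ⁻¹ * ⟪z, r⟫)| + |τ * ⟪DW r, p⟫| + |⟪DU u, q⟫|
          + |τ * ⟪DW z, q⟫| + |c₀ * ⟪p, q⟫| := by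
        gcongr <;> exact abs_add_le _ _
      _ ≤ |a u v| + |⟪DU v, p⟫| + |τ * (κ⁻¹ * ⟪z, r⟫)| + |τ * ⟪DW r, p⟫| + |⟪DU u, q⟫|
          + |τ * ⟪DW z, q⟫| + |c₀ * ⟪p, q⟫| := by
        gcongr <;> exact abs_add_le _ _
  have hfinal : (Ca + 2 * Cb + 4) * N1 * N2
      = Ca * (N1 * N2) + 2 * (Cb * (N1 * N2)) + 4 * (N1 * N2) := by ring
  have hcomm : N2 * N1 = N1 * N2 := mul_comm _ _
  linarith [hsum, h1, h2, h3, h4, h5, h6, h7, m1, m2, m3, m4, m5, m6, m7]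
end

section
/- In the abstract discrete Biot setting, if (v,r,q) ∈ U × W × Q satisfies B(u,z,p;v,r,q) = 0 for all (u,z,p) ∈ U × W × Q, then v = 0, r = 0 and q = 0. This holds for every storage coefficient c₀ with 0 ≤ c₀ < 1, including c₀ = 0. -/
open scoped RealInnerProductSpace

/-- In the abstract discrete Biot setting, if `(v,r,q)` satisfies `B(u,z,p;v,r,q) = 0` for
all `(u,z,p)`, then `v = 0`, `r = 0` and `q = 0`; this holds for every storage coefficient
`c₀` with `0 ≤ c₀ < 1`, including `c₀ = 0`. -/
theorem biot_form_nondegenerate {U W Q : Type*}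
    [NormedAddCommGroup U] [InnerProductSpace ℝ U] [FiniteDimensional ℝ U]
    [NormedAddCommGroup W] [InnerProductSpace ℝ W] [FiniteDimensional ℝ W]
    [NormedAddCommGroup Q] [InnerProductSpace ℝ Q] [FiniteDimensional ℝ Q]
    (τ κ c₀ γa Ca Cb βS : ℝ)
    (hτ : 0 < τ) (hκ : 0 < κ) (hκ1 : κ ≤ 1) (hc₀ : 0 ≤ c₀) (hc₀1 : c₀ < 1)
    (hγa : 0 < γa) (hCa : 0 < Ca) (hCb : 0 < Cb) (hβS : 0 < βS)
    (a : U →ₗ[ℝ] U →ₗ[ℝ] ℝ) (DU : U →ₗ[ℝ] Q) (DW : W →ₗ[ℝ] Q)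
    (hsymm : ∀ u v : U, a u v = a v u)
    (hcoer : ∀ u : U, γa * ‖u‖ ^ 2 ≤ a u u)
    (hbound : ∀ u v : U, |a u v| ≤ Ca * ‖u‖ * ‖v‖)
    (hDU : ∀ v : U, ‖DU v‖ ≤ Cb * ‖v‖)
    (hinfsup : ∀ q : Q, βS * ‖q‖ ≤ ⨆ v : {v : U // v ≠ 0}, ⟪DU (v : U), q⟫ / ‖(v : U)‖)
    (v : U) (r : W) (q : Q)
    (h : ∀ (u : U) (z : W) (p : Q), biotB a DU DW τ κ c₀ u z p v r q = 0) :
    v = 0 ∧ r = 0 ∧ q = 0 := by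
  have hsum : a v v + τ * (κ⁻¹ * ⟪r, r⟫) + c₀ * ⟪q, q⟫ = 0 := by
    have h1 := h v r (-q)
    simp only [biotB, inner_neg_left, inner_neg_right] at h1
    linarith
  have hrr : (0:ℝ) ≤ ⟪r, r⟫ := real_inner_self_nonneg
  have hqq : (0:ℝ) ≤ ⟪q, q⟫ := real_inner_self_nonneg
  have havv : γa * ‖v‖ ^ 2 ≤ a v v := hcoer v
  have hv : v = 0 := by
    have hv2 : ‖v‖ ^ 2 ≤ 0 := by
      nlinarith [mul_nonneg hc₀ hqq, mul_nonneg hτ.le (mul_nonneg (inv_nonneg.mpr hκ.le) hrr)]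
    have : ‖v‖ = 0 := by nlinarith [norm_nonneg v]
    exact norm_eq_zero.mp this
  have hr : r = 0 := by
    have havv0 : 0 ≤ a v v := le_trans (by positivity) havv
    have hκinv : 0 < κ⁻¹ := inv_pos.mpr hκ
    have hle : τ * (κ⁻¹ * ⟪r, r⟫) ≤ 0 := by nlinarith [mul_nonneg hc₀ hqq]
    have hrr0 : ⟪r, r⟫ ≤ (0:ℝ) := by
      by_contra hp
      push_neg at hp
      nlinarith [mul_pos hτ (mul_pos hκinv hp)]
    have : ⟪r, r⟫ = (0:ℝ) := le_antisymm hrr0 hrr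
    exact inner_self_eq_zero.mp (by exact_mod_cast this)
  have hq : q = 0 := by
    subst hv hr
    have hz : ∀ u : U, ⟪DU u, q⟫ = (0:ℝ) := by
      intro u
      have := h u 0 0
      simpa [biotB] using this
    have hsup : (⨆ v : {v : U // v ≠ 0}, ⟪DU (v : U), q⟫ / ‖(v : U)‖) = 0 := by
      have hf : (fun v : {v : U // v ≠ 0} => ⟪DU (v : U), q⟫ / ‖(v : U)‖) = fun _ => (0:ℝ) := by
        funext w; rw [hz]; simp
      rw [hf]
      rcases isEmpty_or_nonempty {v : U // v ≠ 0} with he | hn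
      · rw [iSup_of_empty']; exact Real.sSup_empty
      · exact ciSup_const
    have := hinfsup q
    rw [hsup] at this
    have : ‖q‖ ≤ 0 := by nlinarith [norm_nonneg q]
    exact norm_eq_zero.mp (le_antisymm this (norm_nonneg q))
  exact ⟨hv, hr, hq⟩
end

section
/- In the abstract discrete Biot setting, the discrete Euler–Galerkin system is well posed: for every triple of linear functionals F : U → ℝ, G : W → ℝ, S : Q → ℝ, there exists a unique (u,z,p) ∈ U × W × Q such that B(u,z,p;v,r,q) = F(v) + G(r) + S(q) for all (v,r,q) ∈ U × W × Q. -/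
open scoped RealInnerProductSpace

/-- Well-posedness of the discrete Euler–Galerkin system in the abstract discrete Biot
setting: for every triple of linear functionals `F, G, S` there is a unique `(u,z,p)` with
`B(u,z,p;v,r,q) = F(v) + G(r) + S(q)` for all `(v,r,q)`. -/
theorem biot_well_posedness {U W Q : Type*}
    [NormedAddCommGroup U] [InnerProductSpace ℝ U] [FiniteDimensional ℝ U]
    [NormedAddCommGroup W] [InnerProductSpace ℝ W] [FiniteDimensional ℝ W]
    [NormedAddCommGroup Q] [InnerProductSpace ℝ Q] [FiniteDimensional ℝ Q]
    (τ κ c₀ γa Ca Cb βS : ℝ)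
    (hτ : 0 < τ) (hκ : 0 < κ) (hκ1 : κ ≤ 1) (hc₀ : 0 ≤ c₀) (hc₀1 : c₀ < 1)
    (hγa : 0 < γa) (hCa : 0 < Ca) (hCb : 0 < Cb) (hβS : 0 < βS)
    (a : U →ₗ[ℝ] U →ₗ[ℝ] ℝ) (DU : U →ₗ[ℝ] Q) (DW : W →ₗ[ℝ] Q)
    (hsymm : ∀ u v : U, a u v = a v u)
    (hcoer : ∀ u : U, γa * ‖u‖ ^ 2 ≤ a u u)
    (hbound : ∀ u v : U, |a u v| ≤ Ca * ‖u‖ * ‖v‖)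
    (hDU : ∀ v : U, ‖DU v‖ ≤ Cb * ‖v‖)
    (hinfsup : ∀ q : Q, βS * ‖q‖ ≤ ⨆ v : {v : U // v ≠ 0}, ⟪DU (v : U), q⟫ / ‖(v : U)‖)
    (F : U →ₗ[ℝ] ℝ) (G : W →ₗ[ℝ] ℝ) (S : Q →ₗ[ℝ] ℝ) :
    ∃! x : U × W × Q, ∀ (v : U) (r : W) (q : Q),
      biotB a DU DW τ κ c₀ x.1 x.2.1 x.2.2 v r q = F v + G r + S q := by
  classical
  -- the bilinear operator L : X → Dual X
  let L : (U × W × Q) →ₗ[ℝ] Module.Dual ℝ (U × W × Q) := LinearMap.mk₂ ℝ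
    (fun x y => biotB a DU DW τ κ c₀ x.1 x.2.1 x.2.2 y.1 y.2.1 y.2.2)
    (by
      rintro ⟨u, z, p⟩ ⟨u', z', p'⟩ ⟨v, r, q⟩
      simp [biotB, inner_add_left, inner_add_right, map_add, LinearMap.add_apply, Prod.mk_add_mk]
      ring)
    (by
      rintro c ⟨u, z, p⟩ ⟨v, r, q⟩
      simp [biotB, inner_smul_left, inner_smul_right, map_smul, LinearMap.smul_apply,
        smul_eq_mul, Prod.smul_mk]
      ring)
    (by
      rintro ⟨u, z, p⟩ ⟨v, r, q⟩ ⟨v', r', q'⟩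
      simp [biotB, inner_add_left, inner_add_right, map_add, LinearMap.add_apply, Prod.mk_add_mk]
      ring)
    (by
      rintro c ⟨u, z, p⟩ ⟨v, r, q⟩
      simp [biotB, inner_smul_left, inner_smul_right, map_smul, LinearMap.smul_apply,
        smul_eq_mul, Prod.smul_mk]
      ring)
  have hLapply : ∀ (x y : U × W × Q), L x y = biotB a DU DW τ κ c₀ x.1 x.2.1 x.2.2 y.1 y.2.1 y.2.2 := by
    intro x y; rfl
  -- injectivity of L
  have hinj : Function.Injective L := by
    rw [← LinearMap.ker_eq_bot, LinearMap.ker_eq_bot']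
    rintro ⟨u, z, p⟩ hm
    have hm' : ∀ y : U × W × Q, L (u, z, p) y = 0 := fun y => by rw [hm]; rfl
    have h1 : a u u + τ * (κ⁻¹ * ⟪z, z⟫) + c₀ * ⟪p, p⟫ = 0 := by
      have := hm' (u, z, -p)
      rw [hLapply] at this
      simp only [biotB] at this
      rw [inner_neg_right (𝕜 := ℝ)] at this
      rw [inner_neg_right (𝕜 := ℝ)] at this
      rw [inner_neg_right (𝕜 := ℝ)] at this
      linarith
    have hau : 0 ≤ a u u := le_trans (by positivity) (hcoer u)
    have hz2 : 0 ≤ τ * (κ⁻¹ * ⟪z, z⟫) := by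
      have : (0:ℝ) ≤ ⟪z, z⟫ := real_inner_self_nonneg
      positivity
    have hp2 : 0 ≤ c₀ * ⟪p, p⟫ := by
      have : (0:ℝ) ≤ ⟪p, p⟫ := real_inner_self_nonneg
      positivity
    have hauz : a u u = 0 ∧ τ * (κ⁻¹ * ⟪z, z⟫) = 0 := by
      constructor <;> linarith
    have hu0 : u = 0 := by
      have : γa * ‖u‖ ^ 2 ≤ 0 := hauz.1 ▸ hcoer u
      have hn : ‖u‖ ^ 2 = 0 := le_antisymm (by nlinarith) (by positivity)
      simpa using (pow_eq_zero_iff (n := 2) (by norm_num)).mp hn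
    have hz0 : z = 0 := by
      have hzz : ⟪z, z⟫ = (0:ℝ) := by
        have hτκ : τ * κ⁻¹ ≠ 0 := by positivity
        have := hauz.2
        rw [← mul_assoc] at this
        exact (mul_eq_zero.mp this).resolve_left hτκ
      exact inner_self_eq_zero.mp hzz
    have hp0 : p = 0 := by
      have hDUp : ∀ v : U, ⟪DU v, p⟫ = (0:ℝ) := by
        intro v
        have := hm' (v, 0, 0)
        rw [hLapply] at this
        simp only [biotB, hu0, hz0] at this
        simpa using this
      have hsup : (⨆ v : {v : U // v ≠ 0}, ⟪DU (v : U), p⟫ / ‖(v : U)‖) = 0 := by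
        rcases isEmpty_or_nonempty {v : U // v ≠ 0} with hE | hN
        · exact Real.iSup_of_isEmpty _
        · have : ∀ v : {v : U // v ≠ 0}, ⟪DU (v : U), p⟫ / ‖(v : U)‖ = 0 := by
            intro v; rw [hDUp]; simp
          simp only [this]
          exact ciSup_const
      have := hinfsup p
      rw [hsup] at this
      have hnp : ‖p‖ = 0 := le_antisymm (by nlinarith [norm_nonneg p]) (norm_nonneg p)
      exact norm_eq_zero.mp hnp
    simp [Prod.ext_iff, hu0, hz0, hp0]
  -- surjectivity
  have hfr : Module.finrank ℝ (U × W × Q)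
      = Module.finrank ℝ (Module.Dual ℝ (U × W × Q)) :=
    (Subspace.dual_finrank_eq).symm
  have hsurj : Function.Surjective L :=
    (LinearMap.injective_iff_surjective_of_finrank_eq_finrank hfr).mp hinj
  -- the right-hand side functional
  let Φ : Module.Dual ℝ (U × W × Q) := F.comp (LinearMap.fst ℝ U (W × Q))
    + G.comp ((LinearMap.fst ℝ W Q).comp (LinearMap.snd ℝ U (W × Q)))
    + S.comp ((LinearMap.snd ℝ W Q).comp (LinearMap.snd ℝ U (W × Q)))
  obtain ⟨x, hx⟩ := hsurj Φ
  refine ⟨x, ?_, ?_⟩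
  · intro v r q
    calc biotB a DU DW τ κ c₀ x.1 x.2.1 x.2.2 v r q
        = L x (v, r, q) := (hLapply x (v, r, q)).symm
      _ = Φ (v, r, q) := by rw [hx]
      _ = F v + G r + S q := rfl
  · intro y hy
    apply hinj
    rw [hx]
    apply LinearMap.ext
    rintro ⟨v, r, q⟩
    calc L y (v, r, q)
        = biotB a DU DW τ κ c₀ y.1 y.2.1 y.2.2 v r q := hLapply y (v, r, q)
      _ = F v + G r + S q := hy v r q
      _ = Φ (v, r, q) := rfl
end

section
/- Let U be a real inner product space with norm ‖·‖_U, U_h ⊆ U a subspace, Q a real inner product space with norm ‖·‖_Q, and D : U → Q a linear map with ‖Dv‖_Q ≤ C_b‖v‖_U for all v ∈ U, where C_b > 0. Let a : U × U → ℝ be a bilinear form with |a(u,v)| ≤ C_a‖u‖_U‖v‖_U for all u,v ∈ U and a(v,v) ≥ γ_a‖v‖_U² for all v ∈ U_h, where C_a, γ_a > 0. Let u ∈ U, r ∈ Q, and suppose Πu ∈ U_h satisfies the modified elliptic projection equation a(Πu, v) = a(u, v) + ⟨Dv, r⟩_Q for all v ∈ U_h. Then for every Iu ∈ U_h: ‖u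 − Πu‖_U ≤ (1 + C_a/γ_a)·‖u − Iu‖_U + (C_b/γ_a)·‖r‖_Q. -/
open scoped RealInnerProductSpace

/-! Set `e = Πu − Iu ∈ U_h`. Subtracting `a(Iu, e)` from the projection equation tested with `e`
gives `a(e, e) = a(u − Iu, e) + ⟨De, r⟩`, so coercivity and continuity yield
`γ_a‖e‖² ≤ (C_a‖u − Iu‖ + C_b‖r‖)‖e‖`, i.e. `‖e‖ ≤ (C_a‖u − Iu‖ + C_b‖r‖)/γ_a`;
the triangle inequality `‖u − Πu‖ ≤ ‖u − Iu‖ + ‖e‖` finishes. -/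

theorem le_div_of_mul_sq_le_mul {γ M x : ℝ} (hγ : 0 < γ) (hM : 0 ≤ M)
    (h : γ * x ^ 2 ≤ M * x) : x ≤ M / γ := by
  rw [le_div_iff₀ hγ]
  nlinarith

section BilinearForm

variable {U Q : Type*} [NormedAddCommGroup U] [InnerProductSpace ℝ U]
  [NormedAddCommGroup Q] [InnerProductSpace ℝ Q]

theorem apply_sub_left_eq_of_apply_eq (a : U →ₗ[ℝ] U →ₗ[ℝ] ℝ) (D : U →ₗ[ℝ] Q)
    {u Pu w v : U} {r : Q} (hproj : a Pu v = a u v + ⟪D v, r⟫) :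
    a (Pu - w) v = a (u - w) v + ⟪D v, r⟫ := by
  simp only [map_sub, LinearMap.sub_apply]
  linarith

theorem apply_add_inner_le (a : U →ₗ[ℝ] U →ₗ[ℝ] ℝ) (D : U →ₗ[ℝ] Q) {Ca Cb : ℝ}
    (hbound : ∀ u v : U, |a u v| ≤ Ca * ‖u‖ * ‖v‖) (hD : ∀ v : U, ‖D v‖ ≤ Cb * ‖v‖)
    (w v : U) (r : Q) :
    a w v + ⟪D v, r⟫ ≤ (Ca * ‖w‖ + Cb * ‖r‖) * ‖v‖ :=
  calc a w v + ⟪D v, r⟫ ≤ Ca * ‖w‖ * ‖v‖ + ‖D v‖ * ‖r‖ :=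
        add_le_add (le_of_abs_le (hbound w v)) (real_inner_le_norm _ _)
    _ ≤ Ca * ‖w‖ * ‖v‖ + Cb * ‖v‖ * ‖r‖ := by gcongr; exact hD v
    _ = (Ca * ‖w‖ + Cb * ‖r‖) * ‖v‖ := by ring

end BilinearForm

/-- Quasi-optimality of the modified elliptic projection: if `Πu ∈ U_h` satisfies
`a(Πu, v) = a(u, v) + ⟨Dv, r⟩_Q` for all `v ∈ U_h`, then for every `Iu ∈ U_h`,
`‖u − Πu‖_U ≤ (1 + C_a/γ_a)‖u − Iu‖_U + (C_b/γ_a)‖r‖_Q`. -/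
theorem modified_elliptic_projection_estimate {U Q : Type*}
    [NormedAddCommGroup U] [InnerProductSpace ℝ U]
    [NormedAddCommGroup Q] [InnerProductSpace ℝ Q]
    (Uh : Submodule ℝ U) (D : U →ₗ[ℝ] Q)
    (Cb Ca γa : ℝ) (hCb : 0 < Cb) (hCa : 0 < Ca) (hγa : 0 < γa)
    (hD : ∀ v : U, ‖D v‖ ≤ Cb * ‖v‖)
    (a : U →ₗ[ℝ] U →ₗ[ℝ] ℝ)
    (hbound : ∀ u v : U, |a u v| ≤ Ca * ‖u‖ * ‖v‖)
    (hcoer : ∀ v ∈ Uh, γa * ‖v‖ ^ 2 ≤ a v v)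
    (u : U) (r : Q) (Pu : U) (hPu : Pu ∈ Uh)
    (hproj : ∀ v ∈ Uh, a Pu v = a u v + ⟪D v, r⟫)
    (Iu : U) (hIu : Iu ∈ Uh) :
    ‖u - Pu‖ ≤ (1 + Ca / γa) * ‖u - Iu‖ + (Cb / γa) * ‖r‖ := by
  have he : Pu - Iu ∈ Uh := Uh.sub_mem hPu hIu
  have hsq : γa * ‖Pu - Iu‖ ^ 2 ≤ (Ca * ‖u - Iu‖ + Cb * ‖r‖) * ‖Pu - Iu‖ :=
    calc γa * ‖Pu - Iu‖ ^ 2 ≤ a (Pu - Iu) (Pu - Iu) := hcoer _ he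
      _ = a (u - Iu) (Pu - Iu) + ⟪D (Pu - Iu), r⟫ :=
          apply_sub_left_eq_of_apply_eq a D (hproj _ he)
      _ ≤ _ := apply_add_inner_le a D hbound hD _ _ r
  have hdiff := le_div_of_mul_sq_le_mul hγa (by positivity) hsq
  calc ‖u - Pu‖ ≤ ‖u - Iu‖ + ‖Pu - Iu‖ := by
        rw [norm_sub_rev Pu Iu]; exact norm_sub_le_norm_sub_add_norm_sub u Iu Pu
    _ ≤ ‖u - Iu‖ + (Ca * ‖u - Iu‖ + Cb * ‖r‖) / γa := by gcongr
    _ = (1 + Ca / γa) * ‖u - Iu‖ + (Cb / γa) * ‖r‖ := by ring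
end

section
/- In the abstract discrete Biot setting with error sequences, there is a constant C > 0 depending only on γ_a, C_a and β_S (independent of κ, c₀, τ and N) such that for every 1 ≤ m ≤ N: ‖e_u^m‖_U + ‖e_p^m‖_Q ≤ C·( ‖e_u^0‖_U + c₀^{1/2}·‖e_p^0‖_Q + Σ_{j=1}^{N} τ·‖R^j‖_Q + (Σ_{j=1}^{N} (τ/κ)·‖ρ_z^j‖_{W0}²)^{1/2} ). -/
/-!
Testing the three equations with `v = e_u^m - e_u^{m-1}`, `w = e_z^m`, `q = e_p^m` and using the
symmetry and positivity of `a` gives the energy inequality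
`E_m ≤ E_{m-1} + (τ/κ)‖ρ_z^m‖² + 2τ‖R^m‖‖e_p^m‖` for `E_m = a(e_u^m, e_u^m) + c₀‖e_p^m‖²`,
the flux error being absorbed by Young's inequality. The inf-sup condition turns the first
equation into `‖e_p^m‖ ≤ (C_a/β_S)‖e_u^m‖`. After summation, at the time step where `‖e_u‖` is
largest, coercivity gives `γ_a x² ≤ A + B x` for that largest value `x`, hence
`x ≤ √(A/γ_a) + B/γ_a`.
-/

open scoped RealInnerProductSpace
open Finset

lemma le_sqrt_div_add_div_of_mul_sq_le {x A B γ : ℝ} (hγ : 0 < γ) (hA : 0 ≤ A) (hB : 0 ≤ B)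
    (h : γ * x ^ 2 ≤ A + B * x) : x ≤ √(A / γ) + B / γ := by
  set s := √(A / γ)
  have hs : γ * s ^ 2 = A := by
    rw [Real.sq_sqrt (div_nonneg hA hγ.le)]
    field_simp
  have hs0 : 0 ≤ s := Real.sqrt_nonneg _
  by_contra! hx
  have hsx : s ≤ x := by linarith [div_nonneg hB hγ.le]
  have hx0 : 0 < x := lt_of_le_of_lt (by positivity) hx
  have : A + B * x < γ * x ^ 2 :=
    calc A + B * x = γ * s * s + B * x := by rw [← hs]; ring
      _ ≤ γ * x * s + B * x := by gcongr
      _ = γ * x * (s + B / γ) := by field_simp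
      _ < γ * x * x := by gcongr
      _ = γ * x ^ 2 := by ring
  linarith

lemma le_sqrt_div_add_div_of_forall_mul_sq_le {x : ℕ → ℝ} {N : ℕ} {γ A B : ℝ} (hγ : 0 < γ)
    (hA : 0 ≤ A) (hB : 0 ≤ B) (h : ∀ M, (∀ j ≤ N, x j ≤ M) → ∀ j ≤ N, γ * x j ^ 2 ≤ A + B * M)
    {m : ℕ} (hm : m ≤ N) : x m ≤ √(A / γ) + B / γ := by
  obtain ⟨k, hk, hmax⟩ := exists_max_image (range (N + 1)) x ⟨0, by simp⟩
  simp only [mem_range] at hk hmax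
  have hxk := h (x k) (fun j hj => hmax j (by omega)) k (by omega)
  exact (hmax m (by omega)).trans (le_sqrt_div_add_div_of_mul_sq_le hγ hA hB hxk)

lemma le_add_sum_Icc_of_le_add {E f : ℕ → ℝ} {m : ℕ}
    (h : ∀ j ∈ Icc 1 m, E j ≤ E (j - 1) + f j) : E m ≤ E 0 + ∑ j ∈ Icc 1 m, f j := by
  induction m with
  | zero => simp
  | succ k ih =>
    have hstep := h (k + 1) (by simp)
    have hk := ih fun j hj => h j (by simp only [mem_Icc] at hj ⊢; omega)
    rw [sum_Icc_succ_top (by omega)]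
    simp only [Nat.add_sub_cancel] at hstep
    linarith

lemma apply_self_sub_apply_self_le {E : Type*} [AddCommGroup E] [Module ℝ E]
    {a : E →ₗ[ℝ] E →ₗ[ℝ] ℝ} (hsym : ∀ u v, a u v = a v u) (hpos : ∀ u, 0 ≤ a u u) (u w : E) :
    a u u - a w w ≤ 2 * a u (u - w) := by
  have := hpos (u - w)
  simp only [map_sub, LinearMap.sub_apply] at this ⊢
  linarith [hsym u w]

section InnerProductSpace

variable {E : Type*} [NormedAddCommGroup E] [InnerProductSpace ℝ E]

lemma norm_sq_sub_norm_sq_le_two_mul_inner (p q : E) :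
    ‖p‖ ^ 2 - ‖q‖ ^ 2 ≤ 2 * ⟪p - q, p⟫ := by
  rw [inner_sub_left, real_inner_self_eq_norm_sq, real_inner_comm]
  nlinarith [norm_sub_sq_real p q, sq_nonneg ‖p - q‖]

lemma inner_sub_norm_sq_le (x y : E) : ⟪x, y⟫ - ‖y‖ ^ 2 ≤ ‖x‖ ^ 2 / 4 := by
  nlinarith [real_inner_le_norm x y, sq_nonneg (‖x‖ - 2 * ‖y‖)]

lemma mul_norm_le_of_le_iSup {V : Type*} [NormedAddCommGroup V] {D : V → E} {q : E} {β K : ℝ}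
    (hK : 0 ≤ K) (hinf : β * ‖q‖ ≤ ⨆ v : {v : V // v ≠ 0}, ⟪D v, q⟫ / ‖(v : V)‖)
    (hD : ∀ v, ⟪D v, q⟫ ≤ K * ‖v‖) : β * ‖q‖ ≤ K :=
  hinf.trans <| Real.iSup_le (fun v => div_le_of_le_mul₀ (norm_nonneg _) hK (hD v)) hK

end InnerProductSpace

namespace Biot

def energy {U Q : Type*} [AddCommGroup U] [Module ℝ U] [Norm Q]
    (a : U →ₗ[ℝ] U →ₗ[ℝ] ℝ) (c₀ : ℝ) (u : U) (p : Q) : ℝ :=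
  a u u + c₀ * ‖p‖ ^ 2

lemma mul_norm_sq_le_energy {U Q : Type*} [NormedAddCommGroup U] [Module ℝ U] [Norm Q]
    {a : U →ₗ[ℝ] U →ₗ[ℝ] ℝ} {γa c₀ : ℝ} (hcoer : ∀ u : U, γa * ‖u‖ ^ 2 ≤ a u u) (hc₀ : 0 ≤ c₀)
    (u : U) (p : Q) : γa * ‖u‖ ^ 2 ≤ energy a c₀ u p := by
  unfold energy
  linarith [hcoer u, mul_nonneg hc₀ (sq_nonneg ‖p‖)]

lemma energy_add_le_sq {U Q : Type*} [NormedAddCommGroup U] [Module ℝ U]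
    [NormedAddCommGroup Q]
    {a : U →ₗ[ℝ] U →ₗ[ℝ] ℝ} {c₀ Ca S : ℝ} (hCa : 0 ≤ Ca) (hc₀ : 0 ≤ c₀) (hS : 0 ≤ S)
    (habd : ∀ u v : U, |a u v| ≤ Ca * ‖u‖ * ‖v‖) (u : U) (p : Q) :
    energy a c₀ u p + S ≤ (1 + Ca) * (‖u‖ + √c₀ * ‖p‖ + √S) ^ 2 := by
  have hu : a u u ≤ Ca * ‖u‖ ^ 2 := by linarith [le_abs_self (a u u), habd u u]
  have hp : c₀ * ‖p‖ ^ 2 = (√c₀ * ‖p‖) ^ 2 := by rw [mul_pow, Real.sq_sqrt hc₀]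
  have hS' : S = √S ^ 2 := (Real.sq_sqrt hS).symm
  have h0 : 0 ≤ √c₀ * ‖p‖ := by positivity
  unfold energy
  nlinarith [norm_nonneg u, Real.sqrt_nonneg S, mul_nonneg (norm_nonneg u) h0,
    mul_nonneg (norm_nonneg u) (Real.sqrt_nonneg S), mul_nonneg h0 (Real.sqrt_nonneg S)]

variable {U W Q : Type*}
  [NormedAddCommGroup U] [InnerProductSpace ℝ U]
  [NormedAddCommGroup W] [InnerProductSpace ℝ W]
  [NormedAddCommGroup Q] [InnerProductSpace ℝ Q]

structure ErrorEquations (a : U →ₗ[ℝ] U →ₗ[ℝ] ℝ) (DU : U →ₗ[ℝ] Q) (DW : W →ₗ[ℝ] Q)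
    (τ κ c₀ : ℝ) (N : ℕ) (eu : ℕ → U) (ez : ℕ → W) (ep : ℕ → Q) (ρz : ℕ → W) (R : ℕ → Q) :
    Prop where
  displacement : ∀ m ≤ N, ∀ v : U, a (eu m) v + ⟪DU v, ep m⟫ = 0
  flux : ∀ m ≤ N, ∀ w : W, κ⁻¹ * ⟪ez m, w⟫ + ⟪DW w, ep m⟫ = κ⁻¹ * ⟪ρz m, w⟫
  mass : ∀ m, 1 ≤ m → m ≤ N → ∀ q : Q,
    ⟪DU (τ⁻¹ • (eu m - eu (m - 1))), q⟫ + ⟪DW (ez m), q⟫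
      - c₀ * ⟪τ⁻¹ • (ep m - ep (m - 1)), q⟫ = ⟪R m, q⟫

variable {a : U →ₗ[ℝ] U →ₗ[ℝ] ℝ} {DU : U →ₗ[ℝ] Q} {DW : W →ₗ[ℝ] Q} {τ κ c₀ : ℝ}

lemma norm_pressure_le {βS Ca : ℝ} (hβS : 0 < βS) (hCa : 0 ≤ Ca)
    (habd : ∀ u v : U, |a u v| ≤ Ca * ‖u‖ * ‖v‖)
    (hinf : ∀ q : Q, βS * ‖q‖ ≤ ⨆ v : {v : U // v ≠ 0}, ⟪DU (v : U), q⟫ / ‖(v : U)‖)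
    {u : U} {p : Q} (h1 : ∀ v, a u v + ⟪DU v, p⟫ = 0) : ‖p‖ ≤ Ca / βS * ‖u‖ := by
  have hD : ∀ v, ⟪DU v, p⟫ ≤ Ca * ‖u‖ * ‖v‖ := fun v =>
    calc ⟪DU v, p⟫ = -a u v := by linarith [h1 v]
      _ ≤ |a u v| := neg_le_abs _
      _ ≤ Ca * ‖u‖ * ‖v‖ := habd u v
  have := mul_norm_le_of_le_iSup (by positivity) (hinf p) hD
  rw [div_mul_eq_mul_div, le_div_iff₀ hβS]
  linarith

lemma energy_identity (hτ : τ ≠ 0) {u u' : U} {z ρ : W} {p p' r : Q}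
    (h1 : ∀ v, a u v + ⟪DU v, p⟫ = 0)
    (h2 : ∀ w, κ⁻¹ * ⟪z, w⟫ + ⟪DW w, p⟫ = κ⁻¹ * ⟪ρ, w⟫)
    (h3 : ∀ q, ⟪DU (τ⁻¹ • (u - u')), q⟫ + ⟪DW z, q⟫ - c₀ * ⟪τ⁻¹ • (p - p'), q⟫ = ⟪r, q⟫) :
    a u (u - u') + c₀ * ⟪p - p', p⟫ = τ / κ * (⟪ρ, z⟫ - ‖z‖ ^ 2) - τ * ⟪r, p⟫ := by
  have h3p := h3 p
  rw [map_smul, real_inner_smul_left, real_inner_smul_left] at h3p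
  have h1d := h1 (u - u')
  have h2z := h2 z
  rw [real_inner_self_eq_norm_sq] at h2z
  field_simp at h3p
  rw [div_eq_mul_inv]
  linear_combination h1d - h3p + τ * h2z

lemma energy_le_step (hsym : ∀ u v : U, a u v = a v u) (hpos : ∀ u : U, 0 ≤ a u u)
    (hc₀ : 0 ≤ c₀) (hτ : 0 < τ) (hκ : 0 ≤ κ) {u u' : U} {z ρ : W} {p p' r : Q}
    (h1 : ∀ v, a u v + ⟪DU v, p⟫ = 0)
    (h2 : ∀ w, κ⁻¹ * ⟪z, w⟫ + ⟪DW w, p⟫ = κ⁻¹ * ⟪ρ, w⟫)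
    (h3 : ∀ q, ⟪DU (τ⁻¹ • (u - u')), q⟫ + ⟪DW z, q⟫ - c₀ * ⟪τ⁻¹ • (p - p'), q⟫ = ⟪r, q⟫) :
    energy a c₀ u p ≤ energy a c₀ u' p' + (τ / κ * ‖ρ‖ ^ 2 + 2 * τ * (‖r‖ * ‖p‖)) := by
  have hid := energy_identity hτ.ne' h1 h2 h3
  have hu := apply_self_sub_apply_self_le hsym hpos u u'
  have hp := mul_le_mul_of_nonneg_left (norm_sq_sub_norm_sq_le_two_mul_inner p p') hc₀
  have hz := mul_le_mul_of_nonneg_left (inner_sub_norm_sq_le ρ z) (div_nonneg hτ.le hκ)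
  have hr := mul_le_mul_of_nonneg_left (neg_le_of_abs_le (abs_real_inner_le_norm r p)) hτ.le
  have hρ : 0 ≤ τ / κ * ‖ρ‖ ^ 2 := by positivity
  unfold energy
  linarith

variable {eu : ℕ → U} {ez : ℕ → W} {ep : ℕ → Q} {ρz : ℕ → W} {R : ℕ → Q} {N : ℕ}

lemma energy_le_initial_add (hsym : ∀ u v : U, a u v = a v u) (hpos : ∀ u : U, 0 ≤ a u u)
    (hc₀ : 0 ≤ c₀) (hτ : 0 < τ) (hκ : 0 ≤ κ)
    (he : ErrorEquations a DU DW τ κ c₀ N eu ez ep ρz R)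
    {m : ℕ} (hm : m ≤ N) :
    energy a c₀ (eu m) (ep m) ≤ energy a c₀ (eu 0) (ep 0)
      + ∑ j ∈ Icc 1 N, (τ / κ * ‖ρz j‖ ^ 2 + 2 * τ * (‖R j‖ * ‖ep j‖)) := by
  have hsteps := le_add_sum_Icc_of_le_add (E := fun j => energy a c₀ (eu j) (ep j))
    (f := fun j => τ / κ * ‖ρz j‖ ^ 2 + 2 * τ * (‖R j‖ * ‖ep j‖)) (m := m) fun j hj => by
      obtain ⟨hj1, hjm⟩ := mem_Icc.mp hj
      exact energy_le_step hsym hpos hc₀ hτ hκ (he.displacement j (by omega))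
        (he.flux j (by omega)) (he.mass j hj1 (by omega))
  exact hsteps.trans (by gcongr)

lemma energy_le_of_forall_norm_le {K M : ℝ} (hK : 0 ≤ K)
    (hM : ∀ j ≤ N, ‖eu j‖ ≤ M) (hp : ∀ j ≤ N, ‖ep j‖ ≤ K * ‖eu j‖)
    (hsym : ∀ u v : U, a u v = a v u) (hpos : ∀ u : U, 0 ≤ a u u)
    (hc₀ : 0 ≤ c₀) (hτ : 0 < τ) (hκ : 0 ≤ κ)
    (he : ErrorEquations a DU DW τ κ c₀ N eu ez ep ρz R)
    {m : ℕ} (hm : m ≤ N) :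
    energy a c₀ (eu m) (ep m) ≤ energy a c₀ (eu 0) (ep 0)
      + ∑ j ∈ Icc 1 N, τ / κ * ‖ρz j‖ ^ 2 + 2 * K * M * ∑ j ∈ Icc 1 N, τ * ‖R j‖ := by
  have hR : ∑ j ∈ Icc 1 N, 2 * τ * (‖R j‖ * ‖ep j‖)
      ≤ ∑ j ∈ Icc 1 N, 2 * K * M * (τ * ‖R j‖) := by
    refine sum_le_sum fun j hj => ?_
    have hjN := (mem_Icc.mp hj).2
    have hpM : ‖ep j‖ ≤ K * M := (hp j hjN).trans (mul_le_mul_of_nonneg_left (hM j hjN) hK)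
    have := mul_le_mul_of_nonneg_left hpM (by positivity : 0 ≤ 2 * τ * ‖R j‖)
    linarith
  have := energy_le_initial_add hsym hpos hc₀ hτ hκ he hm
  rw [sum_add_distrib] at this
  rw [mul_sum]
  linarith

lemma norm_displacement_le {γa Ca K : ℝ} (hγa : 0 < γa) (hCa : 0 ≤ Ca) (hK : 0 ≤ K)
    (hsym : ∀ u v : U, a u v = a v u) (hcoer : ∀ u : U, γa * ‖u‖ ^ 2 ≤ a u u)
    (habd : ∀ u v : U, |a u v| ≤ Ca * ‖u‖ * ‖v‖) (hp : ∀ j ≤ N, ‖ep j‖ ≤ K * ‖eu j‖)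
    (hc₀ : 0 ≤ c₀) (hτ : 0 < τ) (hκ : 0 ≤ κ)
    (he : ErrorEquations a DU DW τ κ c₀ N eu ez ep ρz R)
    {m : ℕ} (hm : m ≤ N) :
    ‖eu m‖ ≤ (√((1 + Ca) / γa) + 2 * K / γa) *
      (‖eu 0‖ + √c₀ * ‖ep 0‖ + (∑ j ∈ Icc 1 N, τ * ‖R j‖)
        + √(∑ j ∈ Icc 1 N, (τ / κ) * ‖ρz j‖ ^ 2)) := by
  set E₀ := energy a c₀ (eu 0) (ep 0)
  set S := ∑ j ∈ Icc 1 N, τ / κ * ‖ρz j‖ ^ 2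
  set T := ∑ j ∈ Icc 1 N, τ * ‖R j‖
  have hpos : ∀ u : U, 0 ≤ a u u := fun u => (by positivity : 0 ≤ γa * ‖u‖ ^ 2).trans (hcoer u)
  have hS : 0 ≤ S := sum_nonneg fun j _ => by positivity
  have hT : 0 ≤ T := sum_nonneg fun j _ => by positivity
  have hE₀S : 0 ≤ E₀ + S := add_nonneg ((by positivity : 0 ≤ γa * ‖eu 0‖ ^ 2).trans
    (mul_norm_sq_le_energy hcoer hc₀ _ _)) hS
  have hu : ‖eu m‖ ≤ √((E₀ + S) / γa) + 2 * K * T / γa :=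
    le_sqrt_div_add_div_of_forall_mul_sq_le (x := fun j => ‖eu j‖) hγa hE₀S (by positivity)
      (fun M hM j hj => by
        have := energy_le_of_forall_norm_le hK hM hp hsym hpos hc₀ hτ hκ he hj
        linarith [mul_norm_sq_le_energy hcoer hc₀ (eu j) (ep j)]) hm
  have hinit : √((E₀ + S) / γa) ≤ √((1 + Ca) / γa) * (‖eu 0‖ + √c₀ * ‖ep 0‖ + √S) := by
    rw [← Real.sqrt_sq (by positivity : 0 ≤ ‖eu 0‖ + √c₀ * ‖ep 0‖ + √S), ← Real.sqrt_mul']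
    · gcongr
      rw [div_mul_eq_mul_div]
      gcongr
      exact energy_add_le_sq hCa hc₀ hS habd _ _
    · positivity
  calc ‖eu m‖ ≤ √((E₀ + S) / γa) + 2 * K * T / γa := hu
    _ ≤ √((1 + Ca) / γa) * (‖eu 0‖ + √c₀ * ‖ep 0‖ + √S) + 2 * K / γa * T := by
      rw [mul_div_right_comm]; gcongr
    _ ≤ _ := by
      have hX : 0 ≤ ‖eu 0‖ + √c₀ * ‖ep 0‖ + √S := by positivity
      nlinarith [mul_nonneg (Real.sqrt_nonneg ((1 + Ca) / γa)) hT,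
        mul_nonneg (by positivity : 0 ≤ 2 * K / γa) hX]

end Biot

theorem biot_displacement_pressure_error_estimate_general {U W Q : Type*}
    [NormedAddCommGroup U] [InnerProductSpace ℝ U]
    [NormedAddCommGroup W] [InnerProductSpace ℝ W]
    [NormedAddCommGroup Q] [InnerProductSpace ℝ Q]
    (γa Ca βS : ℝ) (hγa : 0 < γa) (hCa : 0 < Ca) (hβS : 0 < βS) :
    ∃ C : ℝ, 0 < C ∧
      ∀ (τ κ c₀ Cb : ℝ), 0 < τ → 0 < κ → κ ≤ 1 → 0 ≤ c₀ → c₀ < 1 → 0 < Cb →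
      ∀ (a : U →ₗ[ℝ] U →ₗ[ℝ] ℝ) (DU : U →ₗ[ℝ] Q) (DW : W →ₗ[ℝ] Q),
        (∀ u v : U, a u v = a v u) →
        (∀ u : U, γa * ‖u‖ ^ 2 ≤ a u u) →
        (∀ u v : U, |a u v| ≤ Ca * ‖u‖ * ‖v‖) →
        (∀ v : U, ‖DU v‖ ≤ Cb * ‖v‖) →
        (∀ q : Q, βS * ‖q‖ ≤ ⨆ v : {v : U // v ≠ 0}, ⟪DU (v : U), q⟫ / ‖(v : U)‖) →
      ∀ (N : ℕ), 1 ≤ N →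
      ∀ (eu : ℕ → U) (ez : ℕ → W) (ep : ℕ → Q) (ρz : ℕ → W) (R : ℕ → Q),
        (∀ m ≤ N, ∀ v : U, a (eu m) v + ⟪DU v, ep m⟫ = 0) →
        (∀ m ≤ N, ∀ w : W, κ⁻¹ * ⟪ez m, w⟫ + ⟪DW w, ep m⟫ = κ⁻¹ * ⟪ρz m, w⟫) →
        (∀ m, 1 ≤ m → m ≤ N → ∀ q : Q,
          ⟪DU (τ⁻¹ • (eu m - eu (m - 1))), q⟫ + ⟪DW (ez m), q⟫
            - c₀ * ⟪τ⁻¹ • (ep m - ep (m - 1)), q⟫ = ⟪R m, q⟫) →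
      ∀ m, 1 ≤ m → m ≤ N →
        ‖eu m‖ + ‖ep m‖ ≤
          C * (‖eu 0‖ + Real.sqrt c₀ * ‖ep 0‖ + (∑ j ∈ Icc 1 N, τ * ‖R j‖)
            + Real.sqrt (∑ j ∈ Icc 1 N, (τ / κ) * ‖ρz j‖ ^ 2)) := by
  refine ⟨(1 + Ca / βS) * (√((1 + Ca) / γa) + 2 * (Ca / βS) / γa), by positivity, ?_⟩
  intro τ κ c₀ _ hτ hκ _ hc₀ _ _ a DU DW hsym hcoer habd _ hinf N _ eu ez ep ρz R heq1 heq2 heq3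
    m _ hmN
  have hp : ∀ j ≤ N, ‖ep j‖ ≤ Ca / βS * ‖eu j‖ := fun j hj =>
    Biot.norm_pressure_le hβS hCa.le habd hinf (heq1 j hj)
  have hu := Biot.norm_displacement_le hγa hCa.le (by positivity) hsym hcoer habd hp hc₀ hτ hκ.le
    ⟨heq1, heq2, heq3⟩ hmN
  calc ‖eu m‖ + ‖ep m‖ ≤ (1 + Ca / βS) * ‖eu m‖ := by linarith [hp m hmN]
    _ ≤ _ := by rw [mul_assoc]; gcongr

/-- Displacement and pressure error estimate for minimally Stokes–Biot stable
Euler–Galerkin schemes: there is `C > 0` depending only on `γ_a, C_a, β_S` (independent of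
`κ, c₀, τ, N`) such that for `1 ≤ m ≤ N`,
`‖e_u^m‖_U + ‖e_p^m‖_Q ≤ C(‖e_u^0‖_U + c₀^{1/2}‖e_p^0‖_Q + Σ_j τ‖R^j‖_Q +
(Σ_j (τ/κ)‖ρ_z^j‖²)^{1/2})`. -/
theorem biot_displacement_pressure_error_estimate {U W Q : Type*}
    [NormedAddCommGroup U] [InnerProductSpace ℝ U] [FiniteDimensional ℝ U]
    [NormedAddCommGroup W] [InnerProductSpace ℝ W] [FiniteDimensional ℝ W]
    [NormedAddCommGroup Q] [InnerProductSpace ℝ Q] [FiniteDimensional ℝ Q]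
    (γa Ca βS : ℝ) (hγa : 0 < γa) (hCa : 0 < Ca) (hβS : 0 < βS) :
    ∃ C : ℝ, 0 < C ∧
      ∀ (τ κ c₀ Cb : ℝ), 0 < τ → 0 < κ → κ ≤ 1 → 0 ≤ c₀ → c₀ < 1 → 0 < Cb →
      ∀ (a : U →ₗ[ℝ] U →ₗ[ℝ] ℝ) (DU : U →ₗ[ℝ] Q) (DW : W →ₗ[ℝ] Q),
        (∀ u v : U, a u v = a v u) →
        (∀ u : U, γa * ‖u‖ ^ 2 ≤ a u u) →
        (∀ u v : U, |a u v| ≤ Ca * ‖u‖ * ‖v‖) →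
        (∀ v : U, ‖DU v‖ ≤ Cb * ‖v‖) →
        (∀ q : Q, βS * ‖q‖ ≤ ⨆ v : {v : U // v ≠ 0}, ⟪DU (v : U), q⟫ / ‖(v : U)‖) →
      ∀ (N : ℕ), 1 ≤ N →
      ∀ (eu : ℕ → U) (ez : ℕ → W) (ep : ℕ → Q) (ρz : ℕ → W) (R : ℕ → Q),
        (∀ m ≤ N, ∀ v : U, a (eu m) v + ⟪DU v, ep m⟫ = 0) →
        (∀ m ≤ N, ∀ w : W, κ⁻¹ * ⟪ez m, w⟫ + ⟪DW w, ep m⟫ = κ⁻¹ * ⟪ρz m, w⟫) →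
        (∀ m, 1 ≤ m → m ≤ N → ∀ q : Q,
          ⟪DU (τ⁻¹ • (eu m - eu (m - 1))), q⟫ + ⟪DW (ez m), q⟫
            - c₀ * ⟪τ⁻¹ • (ep m - ep (m - 1)), q⟫ = ⟪R m, q⟫) →
      ∀ m, 1 ≤ m → m ≤ N →
        ‖eu m‖ + ‖ep m‖ ≤
          C * (‖eu 0‖ + Real.sqrt c₀ * ‖ep 0‖ + (∑ j ∈ Icc 1 N, τ * ‖R j‖)
            + Real.sqrt (∑ j ∈ Icc 1 N, (τ / κ) * ‖ρz j‖ ^ 2)) :=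
  biot_displacement_pressure_error_estimate_general γa Ca βS hγa hCa hβS
end

section
/- In the abstract discrete Biot setting with error sequences, for every 1 ≤ m ≤ N: τ·‖D_W e_z^m‖_Q ≤ C_b·(‖e_u^m‖_U + ‖e_u^{m−1}‖_U) + c₀·(‖e_p^m‖_Q + ‖e_p^{m−1}‖_Q) + τ·‖R^m‖_Q. -/
open scoped RealInnerProductSpace

/-- Bound on the divergence part of the flux error in the abstract discrete Biot setting:
for `1 ≤ m ≤ N`,
`τ‖D_W e_z^m‖_Q ≤ C_b(‖e_u^m‖_U + ‖e_u^{m−1}‖_U) + c₀(‖e_p^m‖_Q + ‖e_p^{m−1}‖_Q) + τ‖R^m‖_Q`. -/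
theorem biot_flux_divergence_error_estimate {U W Q : Type*}
    [NormedAddCommGroup U] [InnerProductSpace ℝ U] [FiniteDimensional ℝ U]
    [NormedAddCommGroup W] [InnerProductSpace ℝ W] [FiniteDimensional ℝ W]
    [NormedAddCommGroup Q] [InnerProductSpace ℝ Q] [FiniteDimensional ℝ Q]
    (τ κ c₀ γa Ca Cb βS : ℝ)
    (hτ : 0 < τ) (hκ : 0 < κ) (hκ1 : κ ≤ 1) (hc₀ : 0 ≤ c₀) (hc₀1 : c₀ < 1)
    (hγa : 0 < γa) (hCa : 0 < Ca) (hCb : 0 < Cb) (hβS : 0 < βS)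
    (a : U →ₗ[ℝ] U →ₗ[ℝ] ℝ) (DU : U →ₗ[ℝ] Q) (DW : W →ₗ[ℝ] Q)
    (hsymm : ∀ u v : U, a u v = a v u)
    (hcoer : ∀ u : U, γa * ‖u‖ ^ 2 ≤ a u u)
    (hbound : ∀ u v : U, |a u v| ≤ Ca * ‖u‖ * ‖v‖)
    (hDU : ∀ v : U, ‖DU v‖ ≤ Cb * ‖v‖)
    (hinfsup : ∀ q : Q, βS * ‖q‖ ≤ ⨆ v : {v : U // v ≠ 0}, ⟪DU (v : U), q⟫ / ‖(v : U)‖)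
    (N : ℕ) (hN : 1 ≤ N)
    (eu : ℕ → U) (ez : ℕ → W) (ep : ℕ → Q) (ρz : ℕ → W) (R : ℕ → Q)
    (herr1 : ∀ m ≤ N, ∀ v : U, a (eu m) v + ⟪DU v, ep m⟫ = 0)
    (herr2 : ∀ m ≤ N, ∀ w : W, κ⁻¹ * ⟪ez m, w⟫ + ⟪DW w, ep m⟫ = κ⁻¹ * ⟪ρz m, w⟫)
    (herr3 : ∀ m, 1 ≤ m → m ≤ N → ∀ q : Q,
      ⟪DU (τ⁻¹ • (eu m - eu (m - 1))), q⟫ + ⟪DW (ez m), q⟫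
        - c₀ * ⟪τ⁻¹ • (ep m - ep (m - 1)), q⟫ = ⟪R m, q⟫) :
    ∀ m, 1 ≤ m → m ≤ N →
      τ * ‖DW (ez m)‖ ≤
        Cb * (‖eu m‖ + ‖eu (m - 1)‖) + c₀ * (‖ep m‖ + ‖ep (m - 1)‖) + τ * ‖R m‖ := by
  intro m hm1 hmN
  set q := DW (ez m) with hq
  set S := ‖q‖ with hS
  set A := ‖eu m‖ + ‖eu (m - 1)‖ with hA
  set B := ‖ep m‖ + ‖ep (m - 1)‖ with hB
  have hS0 : 0 ≤ S := norm_nonneg _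
  have key := herr3 m hm1 hmN q
  have hCb' : 0 ≤ Cb := le_of_lt hCb
  have hRHS : 0 ≤ Cb * A + c₀ * B + τ * ‖R m‖ := by positivity
  rcases eq_or_lt_of_le hS0 with h0 | hpos
  · rw [show τ * ‖DW (ez m)‖ = τ * S from rfl, ← h0, mul_zero]; exact hRHS
  have hqq : (⟪q, q⟫ : ℝ) = S ^ 2 := real_inner_self_eq_norm_sq q
  have e1 : ⟪DU (τ⁻¹ • (eu m - eu (m - 1))), q⟫ = τ⁻¹ * ⟪DU (eu m - eu (m - 1)), q⟫ := by
    rw [map_smul, real_inner_smul_left]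
  have e2 : ⟪τ⁻¹ • (ep m - ep (m - 1)), q⟫ = τ⁻¹ * ⟪ep m - ep (m - 1), q⟫ :=
    real_inner_smul_left _ _ _
  rw [e1, e2, hqq] at key
  have hτ0 : τ ≠ 0 := ne_of_gt hτ
  have key2 : τ * S ^ 2 = τ * ⟪R m, q⟫ - ⟪DU (eu m - eu (m - 1)), q⟫
      + c₀ * ⟪ep m - ep (m - 1), q⟫ := by
    field_simp at key
    simp only [map_sub] at key ⊢
    linarith
  have hcs1 : ⟪R m, q⟫ ≤ ‖R m‖ * S := real_inner_le_norm _ _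
  have hcs2 : -⟪DU (eu m - eu (m - 1)), q⟫ ≤ Cb * A * S := by
    have h1 : -⟪DU (eu m - eu (m - 1)), q⟫ ≤ ‖DU (eu m - eu (m - 1))‖ * S :=
      (neg_le_abs _).trans (abs_real_inner_le_norm _ _)
    have h2 : ‖DU (eu m - eu (m - 1))‖ ≤ Cb * A := by
      refine (hDU _).trans ?_
      exact mul_le_mul_of_nonneg_left (norm_sub_le _ _) hCb'
    exact h1.trans (mul_le_mul_of_nonneg_right h2 hS0)
  have hcs3 : c₀ * ⟪ep m - ep (m - 1), q⟫ ≤ c₀ * (B * S) := by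
    refine mul_le_mul_of_nonneg_left ?_ hc₀
    exact (real_inner_le_norm _ _).trans
      (mul_le_mul_of_nonneg_right (norm_sub_le _ _) hS0)
  have hmain : τ * S ^ 2 ≤ (τ * ‖R m‖ + Cb * A + c₀ * B) * S := by
    rw [key2]
    nlinarith
  have : τ * S ≤ τ * ‖R m‖ + Cb * A + c₀ * B := by
    nlinarith
  calc τ * ‖DW (ez m)‖ = τ * S := rfl
    _ ≤ τ * ‖R m‖ + Cb * A + c₀ * B := this
    _ = Cb * A + c₀ * B + τ * ‖R m‖ := by ring
end
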